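/- arXiv:2303.15820 — 7 statements merged into one kernel-verified Lean document; each statement's English description precedes it below -/
import Mathlib

section
/- Suppose (I, {μ_z}_{z∈I}) is an adapted basis of 𝔥₀ and I = I₁ ∪ I₂ with I₁, I₂ disjoint and nonempty, such that μ_z(x)μ_{z'}(x) = 0 for all x ∈ Λ, z ∈ I₁ and z' ∈ I₂. Define Λ_j = {x ∈ Λ : μ_z(x) ≠ 0 for some z ∈ I_j} for j = 1, 2. Then Λ₁ and Λ₂ are disjoint and nonempty, Λ₀ = Λ₁ ∪ Λ₂, and (P₀)_{x,y} = 0 for all x ∈ Λ₁ and y ∈ Λ₂; in particular the matrix ((P₀)_{x,y})_{x,y∈Λ₀} is reducible. -/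
/-!
The range `𝔥₀` of `P₀` is invariant under restriction to `Λ₁`: the `μ_z` with `z ∈ I₁` are
supported in `Λ₁`, those with `z ∈ I₂` in the disjoint set `Λ₂`, and they span `𝔥₀`. If the range
of a Hermitian idempotent `P` is invariant under a self-adjoint `D`, then `D P = P D P` is
self-adjoint, so `D` and `P` commute; for `D` the diagonal indicator of `Λ₁` this is the vanishing
of `P₀` on `Λ₁ × Λ₂`. Moreover `(P₀)_{x,x} = ‖P₀ eₓ‖²`, so `x ∈ Λ₀` iff some vector of `𝔥₀` is
nonzero at `x`, i.e. iff some `μ_z` is, which gives `Λ₀ = Λ₁ ∪ Λ₂`.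
-/

open scoped ComplexOrder

/-- A Hermitian matrix `M` indexed by `Λ`, restricted to a subset `S ⊆ Λ`, is *reducible*
if `S = S₁ ∪ S₂` for disjoint nonempty `S₁, S₂` with `M_{x,y} = 0` for all `x ∈ S₁`,
`y ∈ S₂`. -/
def MatrixReducibleOn {Λ : Type*} (S : Set Λ) (M : Matrix Λ Λ ℂ) : Prop :=
  ∃ S₁ S₂ : Set Λ, S₁ ∪ S₂ = S ∧ Disjoint S₁ S₂ ∧ S₁.Nonempty ∧ S₂.Nonempty ∧
    ∀ x ∈ S₁, ∀ y ∈ S₂, M x y = 0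

/-- `Λ_j` of the statement is `jointSupport μ I_j`. -/
def jointSupport {ι Λ R : Type*} [Zero R] (μ : ι → Λ → R) (J : Set ι) : Set Λ :=
  {x | ∃ z ∈ J, μ z x ≠ 0}

section jointSupport

variable {ι Λ R : Type*}

theorem support_subset_jointSupport [Zero R] (μ : ι → Λ → R) {J : Set ι} {z : ι} (hz : z ∈ J) :
    Function.support (μ z) ⊆ jointSupport μ J :=
  fun _ hx => ⟨z, hz, hx⟩

theorem jointSupport_union [Zero R] (μ : ι → Λ → R) (J₁ J₂ : Set ι) :
    jointSupport μ (J₁ ∪ J₂) = jointSupport μ J₁ ∪ jointSupport μ J₂ := by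
  ext x
  simp only [jointSupport, Set.mem_union, Set.mem_ofPred_eq, or_and_right, exists_or]

theorem jointSupport_image [Zero R] (μ : ι → Λ → R) (J : Set ι) :
    jointSupport id (μ '' J) = jointSupport μ J := by
  ext x
  simp [jointSupport]

theorem jointSupport_span [Semiring R] (s : Set (Λ → R)) :
    jointSupport id (Submodule.span R s : Set (Λ → R)) = jointSupport id s := by
  ext x
  simp only [jointSupport, Set.mem_ofPred_eq, id, SetLike.mem_coe]
  refine ⟨fun ⟨v, hv, hvx⟩ => ?_, fun ⟨v, hv, hvx⟩ => ⟨v, Submodule.subset_span hv, hvx⟩⟩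
  by_contra! h
  exact hvx (Submodule.span_le (p := LinearMap.ker (LinearMap.proj x)) |>.mpr h hv)

theorem disjoint_jointSupport [MulZeroClass R] [NoZeroDivisors R] {μ : ι → Λ → R}
    {J₁ J₂ : Set ι} (hsep : ∀ x, ∀ z ∈ J₁, ∀ z' ∈ J₂, μ z x * μ z' x = 0) :
    Disjoint (jointSupport μ J₁) (jointSupport μ J₂) :=
  Set.disjoint_left.mpr fun x ⟨z, hz, hzx⟩ ⟨z', hz', hz'x⟩ =>
    mul_ne_zero hzx hz'x (hsep x z hz z' hz')

theorem indicator_jointSupport_mem_span [Semiring R] {μ : ι → Λ → R} {J₁ J₂ : Set ι}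
    (hdisj : Disjoint (jointSupport μ J₁) (jointSupport μ J₂)) {v : Λ → R}
    (hv : v ∈ Submodule.span R (μ '' (J₁ ∪ J₂))) :
    (jointSupport μ J₁).indicator v ∈ Submodule.span R (μ '' (J₁ ∪ J₂)) := by
  induction hv using Submodule.span_induction with
  | mem _ hw =>
    obtain ⟨z, hz | hz, rfl⟩ := hw
    · rw [Set.indicator_eq_self.mpr (support_subset_jointSupport μ hz)]
      exact Submodule.subset_span ⟨z, Or.inl hz, rfl⟩
    · rw [Set.indicator_eq_zero'.mpr (hdisj.symm.mono_left (support_subset_jointSupport μ hz))]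
      exact Submodule.zero_mem _
  | zero => simp
  | add _ _ _ _ h₁ h₂ => simpa [Set.indicator_add'] using add_mem h₁ h₂
  | smul c v _ h =>
    convert Submodule.smul_mem _ c h using 1
    exact Set.indicator_const_smul _ c v

end jointSupport

namespace Matrix

variable {n R : Type*} [Fintype n] [DecidableEq n]

theorem apply_eq_zero_of_forall_indicator_mem [Semiring R] [StarRing R] {P : Matrix n n R}
    {V : Submodule R (n → R)} (hP : P.IsHermitian) (hmem : ∀ v, P *ᵥ v ∈ V)
    (hfix : ∀ v ∈ V, P *ᵥ v = v) {S : Set n} (hS : ∀ v ∈ V, S.indicator v ∈ V)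
    {x y : n} (hx : x ∈ S) (hy : y ∉ S) : P x y = 0 := by
  set D : Matrix n n R := diagonal (S.indicator 1)
  have hDv : ∀ v, D *ᵥ v = S.indicator v := fun v => funext fun k => by
    by_cases hk : k ∈ S <;> simp [D, mulVec_diagonal, hk]
  have hD : D.IsHermitian := isHermitian_diagonal_of_self_adjoint _ <| funext fun k => by
    by_cases hk : k ∈ S <;> simp [hk]
  have hPDP : P * D * P = D * P := by
    rw [ext_iff_mulVec]
    intro v
    simp only [← mulVec_mulVec, hDv, hfix _ (hS _ (hmem v))]
  have hcomm : Commute D P := by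
    rw [IsSelfAdjoint.commute_iff hD.isSelfAdjoint hP.isSelfAdjoint, ← hPDP]
    simpa only [hP.isSelfAdjoint.star_eq] using hD.isSelfAdjoint.conjugate P
  simpa [D, diagonal_mul, mul_diagonal, hx, hy] using congrFun₂ hcomm.eq x y

theorem setOf_apply_self_ne_zero_eq_jointSupport [Ring R] [PartialOrder R] [StarRing R]
    [StarOrderedRing R] [NoZeroDivisors R] {P : Matrix n n R} {V : Submodule R (n → R)}
    (hP : P.IsHermitian) (hidem : P * P = P) (hmem : ∀ v, P *ᵥ v ∈ V)
    (hfix : ∀ v ∈ V, P *ᵥ v = v) :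
    {x | P x x ≠ 0} = jointSupport id (V : Set (n → R)) := by
  ext x
  refine ⟨fun hPx => ⟨P *ᵥ Pi.single x 1, hmem _, by simpa [mulVec_single_one] using hPx⟩, ?_⟩
  rintro ⟨v, hv, hvx⟩ hPx
  have hrow : P x = 0 := by
    refine dotProduct_self_star_eq_zero.mp ?_
    rw [← hPx]
    conv_rhs => rw [← hidem, mul_apply']
    congr 1
    funext j
    exact hP.apply j x
  exact hvx (by rw [id, ← hfix v hv, mulVec, hrow, zero_dotProduct])

end Matrix

open Matrix

theorem reducible_of_disconnected_adapted_basis_general {Λ : Type*} [Fintype Λ] [DecidableEq Λ]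
    (h0 : Submodule ℂ (Λ → ℂ))
    (P₀ : Matrix Λ Λ ℂ)
    (hH : P₀.conjTranspose = P₀) (hPP : P₀ * P₀ = P₀)
    (hmem : ∀ v : Λ → ℂ, P₀.mulVec v ∈ h0) (hfix : ∀ v ∈ h0, P₀.mulVec v = v)
    (I : Finset Λ) (μ : Λ → (Λ → ℂ))
    (hspan : Submodule.span ℂ (μ '' ↑I) = h0)
    (hdiag : ∀ z ∈ I, μ z z ≠ 0)
    (I₁ I₂ : Finset Λ) (hI : I = I₁ ∪ I₂)
    (hI₁ : I₁.Nonempty) (hI₂ : I₂.Nonempty)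
    (hsep : ∀ x : Λ, ∀ z ∈ I₁, ∀ z' ∈ I₂, μ z x * μ z' x = 0) :
    Disjoint {x : Λ | ∃ z ∈ I₁, μ z x ≠ 0} {x : Λ | ∃ z ∈ I₂, μ z x ≠ 0} ∧
    {x : Λ | ∃ z ∈ I₁, μ z x ≠ 0}.Nonempty ∧
    {x : Λ | ∃ z ∈ I₂, μ z x ≠ 0}.Nonempty ∧
    {x : Λ | P₀ x x ≠ 0} =
      {x : Λ | ∃ z ∈ I₁, μ z x ≠ 0} ∪ {x : Λ | ∃ z ∈ I₂, μ z x ≠ 0} ∧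
    (∀ x ∈ {x : Λ | ∃ z ∈ I₁, μ z x ≠ 0}, ∀ y ∈ {x : Λ | ∃ z ∈ I₂, μ z x ≠ 0},
      P₀ x y = 0) ∧
    MatrixReducibleOn {x : Λ | P₀ x x ≠ 0} P₀ := by
  subst hspan hI
  rw [Finset.coe_union] at hmem hfix
  have hdisj : Disjoint (jointSupport μ ↑I₁) (jointSupport μ ↑I₂) := disjoint_jointSupport hsep
  obtain ⟨z₁, hz₁⟩ := hI₁
  obtain ⟨z₂, hz₂⟩ := hI₂
  have hne₁ : (jointSupport μ ↑I₁).Nonempty :=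
    ⟨z₁, z₁, hz₁, hdiag z₁ (Finset.mem_union_left _ hz₁)⟩
  have hne₂ : (jointSupport μ ↑I₂).Nonempty :=
    ⟨z₂, z₂, hz₂, hdiag z₂ (Finset.mem_union_right _ hz₂)⟩
  have hΛ₀ : {x | P₀ x x ≠ 0} = jointSupport μ ↑I₁ ∪ jointSupport μ ↑I₂ := by
    rw [setOf_apply_self_ne_zero_eq_jointSupport hH hPP hmem hfix, jointSupport_span,
      jointSupport_image, jointSupport_union]
  have hblock : ∀ x ∈ jointSupport μ ↑I₁, ∀ y ∈ jointSupport μ ↑I₂, P₀ x y = 0 :=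
    fun x hx y hy => apply_eq_zero_of_forall_indicator_mem hH hmem hfix
      (fun _ hv => indicator_jointSupport_mem_span hdisj hv) hx (hdisj.notMem_of_mem_right hy)
  exact ⟨hdisj, hne₁, hne₂, hΛ₀, hblock, _, _, hΛ₀.symm, hdisj, hne₁, hne₂, hblock⟩

/-- Let `T` be a Hermitian positive semidefinite matrix on a nonempty finite set `Λ`,
`𝔥₀ = ker T`, `P₀` the orthogonal projection matrix onto `𝔥₀`, and
`Λ₀ = {x : (P₀)_{x,x} ≠ 0}`.  Suppose `(I, {μ_z}_{z∈I})` is an adapted basis of `𝔥₀`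
and `I = I₁ ∪ I₂` with `I₁, I₂` disjoint nonempty such that `μ_z(x) μ_{z'}(x) = 0` for
all `x ∈ Λ`, `z ∈ I₁`, `z' ∈ I₂`.  Define `Λ_j = {x : μ_z(x) ≠ 0 for some z ∈ I_j}`.
Then `Λ₁`, `Λ₂` are disjoint and nonempty, `Λ₀ = Λ₁ ∪ Λ₂`, and `(P₀)_{x,y} = 0` for all
`x ∈ Λ₁`, `y ∈ Λ₂`; in particular `((P₀)_{x,y})_{x,y∈Λ₀}` is reducible. -/
theorem reducible_of_disconnected_adapted_basis {Λ : Type*} [Fintype Λ] [DecidableEq Λ]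
    [Nonempty Λ] (T : Matrix Λ Λ ℂ) (hT : T.PosSemidef)
    (h0 : Submodule ℂ (Λ → ℂ)) (hh0 : h0 = LinearMap.ker T.mulVecLin)
    (P₀ : Matrix Λ Λ ℂ)
    (hH : P₀.conjTranspose = P₀) (hPP : P₀ * P₀ = P₀)
    (hmem : ∀ v : Λ → ℂ, P₀.mulVec v ∈ h0) (hfix : ∀ v ∈ h0, P₀.mulVec v = v)
    (I : Finset Λ) (μ : Λ → (Λ → ℂ))
    (hcard : I.card = Module.finrank ℂ h0)
    (hbmem : ∀ z ∈ I, μ z ∈ h0)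
    (hli : LinearIndependent ℂ (fun z : I => μ z))
    (hspan : Submodule.span ℂ (μ '' ↑I) = h0)
    (hdiag : ∀ z ∈ I, μ z z ≠ 0)
    (hoff : ∀ z ∈ I, ∀ z' ∈ I, z' ≠ z → μ z z' = 0)
    (I₁ I₂ : Finset Λ) (hI : I = I₁ ∪ I₂) (hIdisj : Disjoint I₁ I₂)
    (hI₁ : I₁.Nonempty) (hI₂ : I₂.Nonempty)
    (hsep : ∀ x : Λ, ∀ z ∈ I₁, ∀ z' ∈ I₂, μ z x * μ z' x = 0) :
    Disjoint {x : Λ | ∃ z ∈ I₁, μ z x ≠ 0} {x : Λ | ∃ z ∈ I₂, μ z x ≠ 0} ∧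
    {x : Λ | ∃ z ∈ I₁, μ z x ≠ 0}.Nonempty ∧
    {x : Λ | ∃ z ∈ I₂, μ z x ≠ 0}.Nonempty ∧
    {x : Λ | P₀ x x ≠ 0} =
      {x : Λ | ∃ z ∈ I₁, μ z x ≠ 0} ∪ {x : Λ | ∃ z ∈ I₂, μ z x ≠ 0} ∧
    (∀ x ∈ {x : Λ | ∃ z ∈ I₁, μ z x ≠ 0}, ∀ y ∈ {x : Λ | ∃ z ∈ I₂, μ z x ≠ 0},
      P₀ x y = 0) ∧
    MatrixReducibleOn {x : Λ | P₀ x x ≠ 0} P₀ :=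
  reducible_of_disconnected_adapted_basis_general h0 P₀ hH hPP hmem hfix I μ hspan hdiag I₁ I₂ hI
    hI₁ hI₂ hsep
end

section
/- Let P be a matrix indexed by Λ with P² = P and P† = P, let Λ₀ = {x ∈ Λ : P_{x,x} ≠ 0}, and suppose Λ₀ = Λ₁ ∪ Λ₂ with Λ₁, Λ₂ disjoint and P_{x,y} = 0 for all x ∈ Λ₁ and y ∈ Λ₂. Define matrices P₁, P₂ by (P_j)_{x,y} = P_{x,y} if x, y ∈ Λ_j and (P_j)_{x,y} = 0 otherwise (j = 1, 2). Then P₁ and P₂ each satisfy P_j² = P_j and P_j† = P_j, and moreover P = P₁ + P₂ and P₁P₂ = P₂P₁ = 0. -/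
/-!
A Hermitian idempotent `P` satisfies `P z z = (P Pᴴ) z z = ∑_w |P z w|²`, so a zero diagonal
entry kills its whole row and column. Hence every nonzero entry `P x y` has both indices in
`Λ₁ ∪ Λ₂`, and the hypothesis `P(Λ₁, Λ₂) = 0` together with hermiticity forces them into the
same block: `P` is block diagonal for `Λ₁ ⊔ Λ₂ ⊔ (Λ \ Λ₀)` with zero last block. The
compressions `P_j` then inherit idempotence and hermiticity, and compressions to disjoint
blocks multiply to zero.
-/

open Matrix
open scoped ComplexOrder

namespace Matrix

variable {n α : Type*}

section Compress

variable (s t : Set n) [DecidablePred (· ∈ s)] [DecidablePred (· ∈ t)]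

def compress [Zero α] (A : Matrix n n α) : Matrix n n α :=
  of fun x y => if x ∈ s ∧ y ∈ s then A x y else 0

variable {s t}

@[simp]
theorem compress_apply [Zero α] (A : Matrix n n α) (x y : n) :
    compress s A x y = if x ∈ s ∧ y ∈ s then A x y else 0 :=
  rfl

theorem conjTranspose_compress [AddMonoid α] [StarAddMonoid α] (A : Matrix n n α) :
    (compress s A)ᴴ = compress s Aᴴ := by
  ext x y
  by_cases hx : x ∈ s <;> by_cases hy : y ∈ s <;> simp [hx, hy]

theorem compress_add_compress [AddZeroClass α] (hst : Disjoint s t) {A : Matrix n n α}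
    (hA : ∀ x y, A x y ≠ 0 → (x ∈ s ∧ y ∈ s) ∨ (x ∈ t ∧ y ∈ t)) :
    compress s A + compress t A = A := by
  ext x y
  by_cases hxy : A x y = 0
  · simp [hxy]
  · rcases hA x y hxy with hs | ht
    · simp [hs, Set.disjoint_left.mp hst hs.1]
    · simp [ht, Set.disjoint_right.mp hst ht.1]

theorem IsHermitian.apply_ne_zero_symm [AddMonoid α] [StarAddMonoid α] {A : Matrix n n α}
    (hA : A.IsHermitian) {x y : n} (hxy : A x y ≠ 0) : A y x ≠ 0 := by
  rwa [← hA.apply y x, star_ne_zero]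

variable [Fintype n]

theorem compress_mul_compress_of_disjoint [NonUnitalNonAssocSemiring α] (hst : Disjoint s t)
    (A B : Matrix n n α) : compress s A * compress t B = 0 := by
  ext x y
  refine Finset.sum_eq_zero fun z _ => ?_
  by_cases hz : z ∈ s
  · simp [Set.disjoint_left.mp hst hz]
  · simp [hz]

theorem compress_mul_compress [NonUnitalNonAssocSemiring α] {A : Matrix n n α}
    (hA : ∀ x y, A x y ≠ 0 → x ∈ s → y ∈ s) (B : Matrix n n α) :
    compress s A * compress s B = compress s (A * B) := by
  ext x y
  simp only [mul_apply, compress_apply]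
  by_cases hxy : x ∈ s ∧ y ∈ s
  · rw [if_pos hxy]
    refine Finset.sum_congr rfl fun z _ => ?_
    by_cases hz : z ∈ s
    · simp [hxy, hz]
    · have : A x z = 0 := by_contra fun h => hz (hA x z h hxy.1)
      simp [hz, this]
  · rw [if_neg hxy]
    refine Finset.sum_eq_zero fun z _ => ?_
    by_cases hx : x ∈ s
    · simp [hx, show y ∉ s from fun hy => hxy ⟨hx, hy⟩]
    · simp [hx]

theorem isIdempotentElem_compress [NonUnitalNonAssocSemiring α] {A : Matrix n n α}
    (hA : IsIdempotentElem A) (hsupp : ∀ x y, A x y ≠ 0 → x ∈ s → y ∈ s) :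
    IsIdempotentElem (compress s A) := by
  rw [IsIdempotentElem, compress_mul_compress hsupp, hA.eq]

end Compress

variable [Fintype n] {R : Type*} [PartialOrder R] [Ring R] [StarRing R] [StarOrderedRing R]
  [NoZeroDivisors R] {P : Matrix n n R}

theorem IsHermitian.row_eq_zero_of_apply_self_eq_zero (hP : P.IsHermitian)
    (hPP : IsIdempotentElem P) {z : n} (hz : P z z = 0) : P z = 0 := by
  refine dotProduct_self_star_eq_zero.mp ?_
  calc P z ⬝ᵥ star (P z) = (P * Pᴴ) z z := rfl
    _ = 0 := by rw [hP.eq, hPP.eq, hz]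

theorem IsHermitian.apply_self_ne_zero_of_apply_ne_zero (hP : P.IsHermitian)
    (hPP : IsIdempotentElem P) {x y : n} (hxy : P x y ≠ 0) : P x x ≠ 0 ∧ P y y ≠ 0 := by
  exact ⟨fun h => hxy (congrFun (hP.row_eq_zero_of_apply_self_eq_zero hPP h) y),
    fun h => hP.apply_ne_zero_symm hxy (congrFun (hP.row_eq_zero_of_apply_self_eq_zero hPP h) x)⟩

end Matrix

theorem projection_splits_general {Λ : Type*} [Fintype Λ]
    (P : Matrix Λ Λ ℂ) (hPP : P * P = P) (hPH : P.conjTranspose = P)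
    (Λ₁ Λ₂ : Set Λ) [DecidablePred (· ∈ Λ₁)] [DecidablePred (· ∈ Λ₂)]
    (hcover : {x : Λ | P x x ≠ 0} = Λ₁ ∪ Λ₂) (hdisj : Disjoint Λ₁ Λ₂)
    (hzero : ∀ x ∈ Λ₁, ∀ y ∈ Λ₂, P x y = 0) :
    ∀ (P₁ P₂ : Matrix Λ Λ ℂ),
      P₁ = (fun x y => if x ∈ Λ₁ ∧ y ∈ Λ₁ then P x y else 0) →
      P₂ = (fun x y => if x ∈ Λ₂ ∧ y ∈ Λ₂ then P x y else 0) →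
      P₁ * P₁ = P₁ ∧ P₁.conjTranspose = P₁ ∧
      P₂ * P₂ = P₂ ∧ P₂.conjTranspose = P₂ ∧
      P = P₁ + P₂ ∧ P₁ * P₂ = 0 ∧ P₂ * P₁ = 0 := by
  intro P₁ P₂ hP₁ hP₂
  obtain rfl : P₁ = compress Λ₁ P := hP₁
  obtain rfl : P₂ = compress Λ₂ P := hP₂
  have hP : P.IsHermitian := hPH
  have hblock : ∀ x y, P x y ≠ 0 → (x ∈ Λ₁ ∧ y ∈ Λ₁) ∨ (x ∈ Λ₂ ∧ y ∈ Λ₂) := by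
    intro x y hxy
    obtain ⟨hx, hy⟩ := hP.apply_self_ne_zero_of_apply_ne_zero hPP hxy
    have hx : x ∈ Λ₁ ∪ Λ₂ := hcover ▸ hx
    have hy : y ∈ Λ₁ ∪ Λ₂ := hcover ▸ hy
    have hyx := hP.apply_ne_zero_symm hxy
    rcases hx with hx | hx <;> rcases hy with hy | hy
    exacts [.inl ⟨hx, hy⟩, (hxy (hzero x hx y hy)).elim, (hyx (hzero y hy x hx)).elim,
      .inr ⟨hx, hy⟩]
  have hsupp₁ : ∀ x y, P x y ≠ 0 → x ∈ Λ₁ → y ∈ Λ₁ := fun x y hxy hx =>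
    (hblock x y hxy).elim And.right fun h => (Set.disjoint_left.mp hdisj hx h.1).elim
  have hsupp₂ : ∀ x y, P x y ≠ 0 → x ∈ Λ₂ → y ∈ Λ₂ := fun x y hxy hx =>
    (hblock x y hxy).elim (fun h => (Set.disjoint_left.mp hdisj h.1 hx).elim) And.right
  exact ⟨isIdempotentElem_compress hPP hsupp₁, by rw [conjTranspose_compress, hPH],
    isIdempotentElem_compress hPP hsupp₂, by rw [conjTranspose_compress, hPH],
    (compress_add_compress hdisj hblock).symm, compress_mul_compress_of_disjoint hdisj P P,
    compress_mul_compress_of_disjoint hdisj.symm P P⟩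

/-- Let `P` be a matrix on a nonempty finite set `Λ` with `P² = P` and `P† = P`, let
`Λ₀ = {x : P_{x,x} ≠ 0}`, and suppose `Λ₀ = Λ₁ ∪ Λ₂` with `Λ₁, Λ₂` disjoint and
`P_{x,y} = 0` for all `x ∈ Λ₁`, `y ∈ Λ₂`.  Define `P_j` by `(P_j)_{x,y} = P_{x,y}` if
`x, y ∈ Λ_j` and `0` otherwise.  Then `P₁`, `P₂` are Hermitian idempotents,
`P = P₁ + P₂`, and `P₁ P₂ = P₂ P₁ = 0`. -/
theorem projection_splits {Λ : Type*} [Fintype Λ] [DecidableEq Λ] [Nonempty Λ]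
    (P : Matrix Λ Λ ℂ) (hPP : P * P = P) (hPH : P.conjTranspose = P)
    (Λ₁ Λ₂ : Set Λ) [DecidablePred (· ∈ Λ₁)] [DecidablePred (· ∈ Λ₂)]
    (hcover : {x : Λ | P x x ≠ 0} = Λ₁ ∪ Λ₂) (hdisj : Disjoint Λ₁ Λ₂)
    (hzero : ∀ x ∈ Λ₁, ∀ y ∈ Λ₂, P x y = 0) :
    ∀ (P₁ P₂ : Matrix Λ Λ ℂ),
      P₁ = (fun x y => if x ∈ Λ₁ ∧ y ∈ Λ₁ then P x y else 0) →
      P₂ = (fun x y => if x ∈ Λ₂ ∧ y ∈ Λ₂ then P x y else 0) →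
      P₁ * P₁ = P₁ ∧ P₁.conjTranspose = P₁ ∧
      P₂ * P₂ = P₂ ∧ P₂.conjTranspose = P₂ ∧
      P = P₁ + P₂ ∧ P₁ * P₂ = 0 ∧ P₂ * P₁ = 0 :=
  projection_splits_general P hPP hPH Λ₁ Λ₂ hcover hdisj hzero
end

section
/- If the matrix ((P₀)_{x,y})_{x,y∈Λ₀} is reducible, then there exists an adapted basis (I, {μ_z}_{z∈I}) of 𝔥₀ together with a decomposition I = I₁ ∪ I₂ into disjoint nonempty subsets such that μ_z(x)μ_{z'}(x) = 0 for all x ∈ Λ, z ∈ I₁ and z' ∈ I₂; in particular this adapted basis is not connected. -/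
open scoped ComplexOrder

/-- A family `{μ_z}_{z ∈ I}` of vectors in `ℂ^Λ` is *connected* if for all `z, z' ∈ I`
there is a sequence `z = z₀, z₁, …, z_n = z'` in `I` with `μ_{z_{i-1}} ∼ μ_{z_i}` for
each `i`, where `μ ∼ ν` means `μ(x) ν(x) ≠ 0` for some `x ∈ Λ`. -/
def FamilyConnected {Λ : Type*} (I : Finset Λ) (μ : Λ → (Λ → ℂ)) : Prop :=
  ∀ z ∈ I, ∀ z' ∈ I,
    Relation.ReflTransGen (fun a b => a ∈ I ∧ b ∈ I ∧ ∃ x, μ a x * μ b x ≠ 0) z z'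

/-!
Let `S₁ ⊔ S₂` be the splitting of `Λ₀`. Since `(P₀)_{xx} = ∑_y |(P₀)_{xy}|²`, the rows and
columns of `P₀` outside `Λ₀` vanish, so `P₀` leaves the vectors supported in `S₁` invariant,
and, being Hermitian, also those supported in the complement of `S₁`. As `P₀` is a projection
onto `𝔥₀`, this splits `𝔥₀` into the vectors of `𝔥₀` supported in `S₁` and those supported
off `S₁`; each part is nonzero because it contains a column `P₀ e_z` with `z ∈ S₁`,
resp. `z ∈ S₂`. An adapted basis of each part, i.e. a reduced row echelon basis, has its
pivots inside the support, and the two together form an adapted basis of `𝔥₀` whose halves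
have disjoint supports.
-/

open Submodule Module

def supportedOn (K : Type*) [Semiring K] {Λ : Type*} (S : Set Λ) : Submodule K (Λ → K) :=
  Submodule.pi Sᶜ fun _ => ⊥

section Supported

variable {K Λ : Type*} [Semiring K] {S : Set Λ}

@[simp]
theorem mem_supportedOn {v : Λ → K} : v ∈ supportedOn K S ↔ ∀ x ∉ S, v x = 0 := by
  simp [supportedOn]

theorem supportedOn_sup_supportedOn_compl : supportedOn K S ⊔ supportedOn K Sᶜ = ⊤ := by
  classical
  refine eq_top_iff.mpr fun v _ => ?_
  rw [← S.indicator_self_add_compl v]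
  exact add_mem_sup (by simp +contextual) (by simp +contextual)

theorem mul_eq_zero_of_mem_supportedOn_compl {v w : Λ → K} (hv : v ∈ supportedOn K S)
    (hw : w ∈ supportedOn K Sᶜ) (x : Λ) : v x * w x = 0 := by
  by_cases hx : x ∈ S
  · rw [mem_supportedOn.mp hw x (not_not_intro hx), mul_zero]
  · rw [mem_supportedOn.mp hv x hx, zero_mul]

end Supported

theorem Submodule.inf_sup_inf_eq_self_of_mapsTo {R M : Type*} [Semiring R] [AddCommMonoid M]
    [Module R M] {N A B : Submodule R M} (f : M →ₗ[R] M) (hf : ∀ v, f v ∈ N)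
    (hfix : ∀ v ∈ N, f v = v) (hA : Set.MapsTo f A A) (hB : Set.MapsTo f B B)
    (hAB : A ⊔ B = ⊤) : N ⊓ A ⊔ N ⊓ B = N := by
  refine le_antisymm (sup_le inf_le_left inf_le_left) fun v hv => ?_
  obtain ⟨a, ha, b, hb, rfl⟩ := mem_sup.mp (hAB ▸ mem_top : v ∈ A ⊔ B)
  rw [← hfix _ hv, map_add]
  exact add_mem_sup ⟨hf a, hA ha⟩ ⟨hf b, hB hb⟩

namespace Matrix

variable {R n : Type*} [Fintype n]

theorem mulVec_mapsTo_supportedOn [Semiring R] {P : Matrix n n R} {S : Set n}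
    (hS : ∀ x ∉ S, ∀ y ∈ S, P x y = 0) :
    Set.MapsTo P.mulVec (supportedOn R S) (supportedOn R S) := by
  intro v hv
  simp only [SetLike.mem_coe, mem_supportedOn] at hv ⊢
  intro x hx
  refine Finset.sum_eq_zero fun y _ => show P x y * v y = 0 from ?_
  by_cases hy : y ∈ S
  · rw [hS x hx y hy, zero_mul]
  · rw [hv y hy, mul_zero]

theorem IsHermitian.mulVec_mapsTo_supportedOn_compl [Semiring R] [StarRing R]
    {P : Matrix n n R} (hP : P.IsHermitian) {S : Set n} (hS : ∀ x ∉ S, ∀ y ∈ S, P x y = 0) :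
    Set.MapsTo P.mulVec (supportedOn R Sᶜ) (supportedOn R Sᶜ) :=
  mulVec_mapsTo_supportedOn fun x hx y hy => by
    rw [← hP.apply, hS y hy x (Set.notMem_compl_iff.mp hx), star_zero]

theorem IsHermitian.apply_eq_zero_of_diag_eq_zero [PartialOrder R] [Ring R] [StarRing R]
    [StarOrderedRing R] [NoZeroDivisors R] {P : Matrix n n R} (hP : P.IsHermitian)
    (hPP : IsIdempotentElem P) {x : n} (hx : P x x = 0) (y : n) : P x y = 0 := by
  have hcol : star (P.col x) ⬝ᵥ P.col x = 0 :=
    calc star (P.col x) ⬝ᵥ P.col x = (Pᴴ * P) x x := rfl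
      _ = 0 := by rw [hP.eq, hPP.eq, hx]
  rw [← hP.apply, show P y x = 0 from congrFun (dotProduct_star_self_eq_zero.mp hcol) y,
    star_zero]

theorem IsHermitian.apply_eq_zero_of_notMem_of_mem [PartialOrder R] [Ring R] [StarRing R]
    [StarOrderedRing R] [NoZeroDivisors R] {P : Matrix n n R} (hP : P.IsHermitian)
    (hPP : IsIdempotentElem P) {S₁ S₂ : Set n} (hunion : S₁ ∪ S₂ = {x | P x x ≠ 0})
    (hzero : ∀ x ∈ S₁, ∀ y ∈ S₂, P x y = 0) : ∀ x ∉ S₁, ∀ y ∈ S₁, P x y = 0 := by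
  intro x hx y hy
  by_cases hxx : P x x = 0
  · exact hP.apply_eq_zero_of_diag_eq_zero hPP hxx y
  · have hx₂ : x ∈ S₂ := (by rwa [hunion] : x ∈ S₁ ∪ S₂).resolve_left hx
    rw [← hP.apply, hzero y hy x hx₂, star_zero]

end Matrix

section AdaptedBasis

variable {K Λ : Type*} [Field K]

structure IsAdaptedBasis (W : Submodule K (Λ → K)) (I : Finset Λ) (μ : Λ → Λ → K) : Prop where
  span_eq : span K (μ '' I) = W
  apply_self_ne_zero : ∀ z ∈ I, μ z z ≠ 0
  apply_eq_zero_of_ne : ∀ z ∈ I, ∀ z' ∈ I, z' ≠ z → μ z z' = 0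

theorem linearIndependent_of_apply_eq_zero_of_ne {I : Finset Λ} {μ : Λ → Λ → K}
    (hdiag : ∀ z ∈ I, μ z z ≠ 0) (hoff : ∀ z ∈ I, ∀ z' ∈ I, z' ≠ z → μ z z' = 0) :
    LinearIndependent K (fun z : I => μ z) := by
  rw [linearIndependent_iff']
  intro s c hsum i hi
  have hi' := congrFun hsum i
  simp only [Finset.sum_apply, Pi.smul_apply, smul_eq_mul, Pi.zero_apply] at hi'
  rw [Finset.sum_eq_single i (fun j _ hji => by
      rw [hoff j j.2 i i.2 (Subtype.coe_ne_coe.mpr hji.symm), mul_zero]) (absurd hi)] at hi'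
  exact (mul_eq_zero.mp hi').resolve_right (hdiag i i.2)

theorem finrank_span_image_eq_card {I : Finset Λ} {μ : Λ → Λ → K}
    (hdiag : ∀ z ∈ I, μ z z ≠ 0) (hoff : ∀ z ∈ I, ∀ z' ∈ I, z' ≠ z → μ z z' = 0) :
    finrank K (span K (μ '' I)) = I.card := by
  have hrange : μ '' ↑I = Set.range fun z : I => μ z := by ext; simp
  rw [hrange, finrank_span_eq_card (linearIndependent_of_apply_eq_zero_of_ne hdiag hoff),
    Fintype.card_coe]

namespace IsAdaptedBasis

variable {W : Submodule K (Λ → K)} {I : Finset Λ} {μ : Λ → Λ → K}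

theorem mem (h : IsAdaptedBasis W I μ) {z : Λ} (hz : z ∈ I) : μ z ∈ W :=
  h.span_eq ▸ subset_span ⟨z, hz, rfl⟩

theorem linearIndependent (h : IsAdaptedBasis W I μ) : LinearIndependent K (fun z : I => μ z) :=
  linearIndependent_of_apply_eq_zero_of_ne h.apply_self_ne_zero h.apply_eq_zero_of_ne

theorem card_eq_finrank (h : IsAdaptedBasis W I μ) : I.card = finrank K W :=
  h.span_eq ▸ (finrank_span_image_eq_card h.apply_self_ne_zero h.apply_eq_zero_of_ne).symm

theorem nonempty (h : IsAdaptedBasis W I μ) (hW : W ≠ ⊥) : I.Nonempty := by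
  rw [Finset.nonempty_iff_ne_empty]
  rintro rfl
  simp [← h.span_eq] at hW

theorem subset_of_le_supportedOn (h : IsAdaptedBasis W I μ) {S : Set Λ}
    (hW : W ≤ supportedOn K S) : ↑I ⊆ S := fun z hz =>
  by_contra fun hzS => h.apply_self_ne_zero z hz (mem_supportedOn.mp (hW (h.mem hz)) z hzS)

variable {W₁ W₂ : Submodule K (Λ → K)} {I₁ I₂ : Finset Λ} {μ₁ μ₂ : Λ → Λ → K} {S : Set Λ}

theorem disjoint (h₁ : IsAdaptedBasis W₁ I₁ μ₁) (h₂ : IsAdaptedBasis W₂ I₂ μ₂)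
    (hW₁ : W₁ ≤ supportedOn K S) (hW₂ : W₂ ≤ supportedOn K Sᶜ) : Disjoint I₁ I₂ := by
  rw [← Finset.disjoint_coe]
  exact disjoint_compl_right.mono (h₁.subset_of_le_supportedOn hW₁)
    (h₂.subset_of_le_supportedOn hW₂)

variable [DecidableEq Λ]

theorem piecewise_mul_eq_zero (h₁ : IsAdaptedBasis W₁ I₁ μ₁) (h₂ : IsAdaptedBasis W₂ I₂ μ₂)
    (hW₁ : W₁ ≤ supportedOn K S) (hW₂ : W₂ ≤ supportedOn K Sᶜ) (x : Λ) :
    ∀ z ∈ I₁, ∀ z' ∈ I₂, I₁.piecewise μ₁ μ₂ z x * I₁.piecewise μ₁ μ₂ z' x = 0 := by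
  intro z hz z' hz'
  rw [Finset.piecewise_eq_of_mem _ _ _ hz,
    Finset.piecewise_eq_of_notMem _ _ _ (Finset.disjoint_right.mp (h₁.disjoint h₂ hW₁ hW₂) hz')]
  exact mul_eq_zero_of_mem_supportedOn_compl (hW₁ (h₁.mem hz)) (hW₂ (h₂.mem hz')) x

theorem union (h₁ : IsAdaptedBasis W₁ I₁ μ₁) (h₂ : IsAdaptedBasis W₂ I₂ μ₂)
    (hW₁ : W₁ ≤ supportedOn K S) (hW₂ : W₂ ≤ supportedOn K Sᶜ) :
    IsAdaptedBasis (W₁ ⊔ W₂) (I₁ ∪ I₂) (I₁.piecewise μ₁ μ₂) := by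
  have hμ₂ : ∀ z ∈ I₂, I₁.piecewise μ₁ μ₂ z = μ₂ z := fun _ hz =>
    Finset.piecewise_eq_of_notMem _ _ _ (Finset.disjoint_right.mp (h₁.disjoint h₂ hW₁ hW₂) hz)
  constructor
  · rw [Finset.coe_union, Set.image_union, span_union, ← h₁.span_eq, ← h₂.span_eq]
    congr 2
    · exact Set.image_congr fun z hz => Finset.piecewise_eq_of_mem _ _ _ hz
    · exact Set.image_congr hμ₂
  · intro z hz
    rcases Finset.mem_union.mp hz with hz | hz
    · simpa [hz] using h₁.apply_self_ne_zero z hz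
    · simpa [hμ₂ z hz] using h₂.apply_self_ne_zero z hz
  · intro z hz z' hz' hne
    rcases Finset.mem_union.mp hz with hz | hz <;> rcases Finset.mem_union.mp hz' with hz' | hz'
    · simpa [hz] using h₁.apply_eq_zero_of_ne z hz z' hz' hne
    · simpa [hz] using
        mem_supportedOn.mp (hW₁ (h₁.mem hz)) z' (h₂.subset_of_le_supportedOn hW₂ hz')
    · simpa [hμ₂ z hz] using mem_supportedOn.mp (hW₂ (h₂.mem hz)) z'
        (not_not_intro (h₁.subset_of_le_supportedOn hW₁ hz'))
    · simpa [hμ₂ z hz] using h₂.apply_eq_zero_of_ne z hz z' hz' hne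

end IsAdaptedBasis

variable [Fintype Λ]

theorem exists_finset_bijective_restrict (W : Submodule K (Λ → K)) :
    ∃ I : Finset Λ, Function.Bijective (LinearMap.funLeft K K ((↑) : I → Λ) ∘ₗ W.subtype) := by
  classical
  -- `I` indexes coordinate functionals that form a basis of the dual of `W`.
  let φ : Λ → Dual K W := fun x => LinearMap.proj x ∘ₗ W.subtype
  obtain ⟨b, -, -, hspan, hli⟩ :=
    exists_linearIndepOn_extension (linearIndepOn_empty K φ) (Set.empty_subset Set.univ)
  refine ⟨b.toFinset, ?_⟩
  have hinj : Function.Injective (LinearMap.funLeft K K ((↑) : b.toFinset → Λ) ∘ₗ W.subtype) := by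
    rw [← LinearMap.ker_eq_bot, eq_bot_iff]
    intro w hw
    have hb : φ '' b ⊆ LinearMap.ker (Dual.eval K W w) := by
      rintro _ ⟨x, hx, rfl⟩
      exact congrFun (LinearMap.mem_ker.mp hw) ⟨x, Set.mem_toFinset.mpr hx⟩
    ext x
    exact span_le.mpr hb (hspan ⟨x, trivial, rfl⟩)
  have hle : finrank K W ≤ b.toFinset.card := by
    simpa using LinearMap.finrank_le_finrank_of_injective hinj
  have hge : b.toFinset.card ≤ finrank K W := by
    rw [Set.toFinset_card, ← Subspace.dual_finrank_eq]
    exact hli.fintype_card_le_finrank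
  refine ⟨hinj, (LinearMap.injective_iff_surjective_of_finrank_eq_finrank ?_).mp hinj⟩
  rw [finrank_fintype_fun_eq_card, Fintype.card_coe]
  omega

theorem exists_isAdaptedBasis [DecidableEq Λ] (W : Submodule K (Λ → K)) :
    ∃ I μ, IsAdaptedBasis W I μ := by
  obtain ⟨I, hI⟩ := exists_finset_bijective_restrict W
  let e := LinearEquiv.ofBijective _ hI
  let μ : Λ → Λ → K := fun z => e.symm fun z' => (Pi.single z 1 : Λ → K) z'
  have hμ : ∀ z, ∀ z' ∈ I, μ z z' = (Pi.single z 1 : Λ → K) z' := fun z z' hz' =>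
    congrFun (e.apply_symm_apply _) ⟨z', hz'⟩
  have hdiag : ∀ z ∈ I, μ z z ≠ 0 := fun z hz => by simp [hμ z z hz]
  have hoff : ∀ z ∈ I, ∀ z' ∈ I, z' ≠ z → μ z z' = 0 := fun z _ z' hz' hne => by
    simp [hμ z z' hz', hne]
  refine ⟨I, μ, eq_of_le_of_finrank_eq ?_ ?_, hdiag, hoff⟩
  · exact span_le.mpr fun _ ⟨z, _, hz⟩ => hz ▸ (e.symm _).2
  · rw [finrank_span_image_eq_card hdiag hoff, e.finrank_eq, finrank_fintype_fun_eq_card,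
      Fintype.card_coe]

end AdaptedBasis

theorem not_familyConnected_union {Λ : Type*} [DecidableEq Λ] {I₁ I₂ : Finset Λ}
    {μ : Λ → Λ → ℂ} (hdisj : Disjoint I₁ I₂) (h₁ : I₁.Nonempty) (h₂ : I₂.Nonempty)
    (hμ : ∀ x, ∀ z ∈ I₁, ∀ z' ∈ I₂, μ z x * μ z' x = 0) : ¬ FamilyConnected (I₁ ∪ I₂) μ := by
  intro hconn
  obtain ⟨z₁, hz₁⟩ := h₁
  obtain ⟨z₂, hz₂⟩ := h₂
  suffices z₂ ∈ I₁ from Finset.disjoint_left.mp hdisj this hz₂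
  have hchain := hconn z₁ (Finset.mem_union_left _ hz₁) z₂ (Finset.mem_union_right _ hz₂)
  clear hz₂
  induction hchain with
  | refl => exact hz₁
  | tail _ hstep ih =>
    obtain ⟨-, hc, x, hx⟩ := hstep
    exact (Finset.mem_union.mp hc).resolve_right fun hc₂ => hx (hμ x _ ih _ hc₂)

theorem disconnected_adapted_basis_of_reducible_general {Λ : Type*} [Fintype Λ] [DecidableEq Λ]
    (h0 : Submodule ℂ (Λ → ℂ))
    (P₀ : Matrix Λ Λ ℂ)
    (hH : P₀.conjTranspose = P₀) (hPP : P₀ * P₀ = P₀)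
    (hmem : ∀ v : Λ → ℂ, P₀.mulVec v ∈ h0) (hfix : ∀ v ∈ h0, P₀.mulVec v = v)
    (hred : MatrixReducibleOn {x : Λ | P₀ x x ≠ 0} P₀) :
    ∃ (I : Finset Λ) (μ : Λ → (Λ → ℂ)) (I₁ I₂ : Finset Λ),
      I.card = Module.finrank ℂ h0 ∧
      (∀ z ∈ I, μ z ∈ h0) ∧
      LinearIndependent ℂ (fun z : I => μ z) ∧
      Submodule.span ℂ (μ '' ↑I) = h0 ∧
      (∀ z ∈ I, μ z z ≠ 0) ∧
      (∀ z ∈ I, ∀ z' ∈ I, z' ≠ z → μ z z' = 0) ∧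
      I = I₁ ∪ I₂ ∧ Disjoint I₁ I₂ ∧ I₁.Nonempty ∧ I₂.Nonempty ∧
      (∀ x : Λ, ∀ z ∈ I₁, ∀ z' ∈ I₂, μ z x * μ z' x = 0) ∧
      ¬ FamilyConnected I μ := by
  replace hH : P₀.IsHermitian := hH
  obtain ⟨S₁, S₂, hunion, -, ⟨z₁, hz₁⟩, ⟨z₂, hz₂⟩, hzero⟩ := hred
  have hdiag : ∀ z ∈ S₁ ∪ S₂, P₀ z z ≠ 0 := fun z hz => by rwa [hunion] at hz
  have hS₁ := hH.apply_eq_zero_of_notMem_of_mem hPP hunion hzero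
  have hsplit : h0 ⊓ supportedOn ℂ S₁ ⊔ h0 ⊓ supportedOn ℂ S₁ᶜ = h0 :=
    inf_sup_inf_eq_self_of_mapsTo P₀.mulVecLin hmem hfix (Matrix.mulVec_mapsTo_supportedOn hS₁)
      (hH.mulVec_mapsTo_supportedOn_compl hS₁) supportedOn_sup_supportedOn_compl
  have hcol : ∀ {S : Set Λ} (z : Λ), z ∈ S₁ ∪ S₂ → (∀ x ∉ S, P₀ x z = 0) →
      h0 ⊓ supportedOn ℂ S ≠ ⊥ := fun z hz hS =>
    (Submodule.ne_bot_iff _).mpr ⟨P₀.col z, ⟨by simpa using hmem (Pi.single z 1), by simpa⟩,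
      fun h => hdiag z hz (congrFun h z)⟩
  obtain ⟨I₁, μ₁, hμ₁⟩ := exists_isAdaptedBasis (h0 ⊓ supportedOn ℂ S₁)
  obtain ⟨I₂, μ₂, hμ₂⟩ := exists_isAdaptedBasis (h0 ⊓ supportedOn ℂ S₁ᶜ)
  have hμ := hsplit ▸ hμ₁.union hμ₂ inf_le_right inf_le_right
  have hdisj := hμ₁.disjoint hμ₂ inf_le_right inf_le_right
  have hI₁ := hμ₁.nonempty (hcol z₁ (.inl hz₁) fun x hx => hS₁ x hx z₁ hz₁)
  have hI₂ := hμ₂.nonempty (hcol z₂ (.inr hz₂) fun x hx => hzero x (not_not.mp hx) z₂ hz₂)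
  have hcross := hμ₁.piecewise_mul_eq_zero hμ₂ inf_le_right inf_le_right
  exact ⟨I₁ ∪ I₂, I₁.piecewise μ₁ μ₂, I₁, I₂, hμ.card_eq_finrank, fun _ => hμ.mem,
    hμ.linearIndependent, hμ.span_eq, hμ.apply_self_ne_zero, hμ.apply_eq_zero_of_ne, rfl,
    hdisj, hI₁, hI₂, hcross, not_familyConnected_union hdisj hI₁ hI₂ hcross⟩

/-- Let `T` be a Hermitian positive semidefinite matrix on a nonempty finite set `Λ`,
`𝔥₀ = ker T` with `dim 𝔥₀ = D₀ ≥ 1`, `P₀` the orthogonal projection matrix onto `𝔥₀`,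
and `Λ₀ = {x : (P₀)_{x,x} ≠ 0}`.  If `((P₀)_{x,y})_{x,y∈Λ₀}` is reducible, then there is
an adapted basis `(I, {μ_z}_{z∈I})` of `𝔥₀` together with a decomposition `I = I₁ ∪ I₂`
into disjoint nonempty subsets such that `μ_z(x) μ_{z'}(x) = 0` for all `x ∈ Λ`,
`z ∈ I₁`, `z' ∈ I₂`; in particular this adapted basis is not connected. -/
theorem disconnected_adapted_basis_of_reducible {Λ : Type*} [Fintype Λ] [DecidableEq Λ]
    [Nonempty Λ] (T : Matrix Λ Λ ℂ) (hT : T.PosSemidef)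
    (h0 : Submodule ℂ (Λ → ℂ)) (hh0 : h0 = LinearMap.ker T.mulVecLin)
    (hD0pos : 1 ≤ Module.finrank ℂ h0)
    (P₀ : Matrix Λ Λ ℂ)
    (hH : P₀.conjTranspose = P₀) (hPP : P₀ * P₀ = P₀)
    (hmem : ∀ v : Λ → ℂ, P₀.mulVec v ∈ h0) (hfix : ∀ v ∈ h0, P₀.mulVec v = v)
    (hred : MatrixReducibleOn {x : Λ | P₀ x x ≠ 0} P₀) :
    ∃ (I : Finset Λ) (μ : Λ → (Λ → ℂ)) (I₁ I₂ : Finset Λ),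
      I.card = Module.finrank ℂ h0 ∧
      (∀ z ∈ I, μ z ∈ h0) ∧
      LinearIndependent ℂ (fun z : I => μ z) ∧
      Submodule.span ℂ (μ '' ↑I) = h0 ∧
      (∀ z ∈ I, μ z z ≠ 0) ∧
      (∀ z ∈ I, ∀ z' ∈ I, z' ≠ z → μ z z' = 0) ∧
      I = I₁ ∪ I₂ ∧ Disjoint I₁ I₂ ∧ I₁.Nonempty ∧ I₂.Nonempty ∧
      (∀ x : Λ, ∀ z ∈ I₁, ∀ z' ∈ I₂, μ z x * μ z' x = 0) ∧
      ¬ FamilyConnected I μ :=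
  disconnected_adapted_basis_of_reducible_general h0 P₀ hH hPP hmem hfix hred
end

section
/- For every adapted basis (I, {μ_z}_{z∈I}) of 𝔥₀, the matrix ((P₀)_{x,y})_{x,y∈Λ₀} is irreducible if and only if the family {μ_z}_{z∈I} is connected. -/
/-!
For the orthogonal projection `P` onto `V`, a set `S` cuts `P` into blocks (`P x y = 0` whenever
exactly one of `x, y` lies in `S`) iff `P` commutes with the indicator of `S`, iff `V` is stable
under multiplying by that indicator. For an adapted basis, a vector of `V` vanishing on `I` is
zero, so `V` is stable under the indicator of `S` iff every `μ z` is supported inside `S` or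
outside `S`. As `Λ₀` is the union of the supports of the `μ z`, both reducibility of `P` on `Λ₀`
and disconnectedness of the family `μ` say that some `S` separates these supports nontrivially.
-/

open scoped ComplexOrder

open Matrix Function Submodule

section

variable {Λ ι : Type*}

def SeparatesSupports (S : Set Λ) (s : Set ι) (μ : ι → Λ → ℂ) : Prop :=
  ∀ z ∈ s, support (μ z) ⊆ S ∨ Disjoint (support (μ z)) S

namespace Matrix

variable [Fintype Λ] {V : Submodule ℂ (Λ → ℂ)} {P : Matrix Λ Λ ℂ}

lemma col_mem_of_isProj (hP : LinearMap.IsProj V P.mulVecLin) (x : Λ) : P.col x ∈ V := by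
  classical
  simpa [mulVec_single_one] using hP.map_mem (Pi.single x 1)

namespace IsHermitian

lemma apply_eq_star_col_dotProduct (hH : P.IsHermitian) (hP : LinearMap.IsProj V P.mulVecLin)
    {v : Λ → ℂ} (hv : v ∈ V) (x : Λ) : v x = star (P.col x) ⬝ᵥ v := by
  conv_lhs => rw [← hP.map_id v hv]
  simp [mulVec, dotProduct, ← hH.apply x]

lemma apply_eq_zero_of_diag_eq_zero_s11 (hH : P.IsHermitian) (hP : LinearMap.IsProj V P.mulVecLin)
    {x : Λ} (hx : P x x = 0) {v : Λ → ℂ} (hv : v ∈ V) : v x = 0 := by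
  have hcol : P.col x = 0 := by
    rw [← dotProduct_star_self_eq_zero,
      ← apply_eq_star_col_dotProduct hH hP (col_mem_of_isProj hP x)]
    exact hx
  rw [apply_eq_star_col_dotProduct hH hP hv, hcol, star_zero, zero_dotProduct]

lemma diag_ne_zero_iff (hH : P.IsHermitian) (hP : LinearMap.IsProj V P.mulVecLin) {x : Λ} :
    P x x ≠ 0 ↔ ∃ v ∈ V, v x ≠ 0 :=
  ⟨fun hx => ⟨P.col x, col_mem_of_isProj hP x, hx⟩,
    fun ⟨_, hv, hvx⟩ hx => hvx (apply_eq_zero_of_diag_eq_zero_s11 hH hP hx hv)⟩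

lemma indicator_mem_of_forall_apply_eq_zero (hH : P.IsHermitian)
    (hP : LinearMap.IsProj V P.mulVecLin)
    {S : Set Λ} (hS : ∀ x ∈ S, ∀ y ∉ S, P x y = 0) {v : Λ → ℂ} (hv : v ∈ V) :
    S.indicator v ∈ V := by
  suffices P *ᵥ S.indicator v = S.indicator v from this ▸ hP.map_mem _
  conv_rhs => rw [← hP.map_id v hv]
  funext x
  simp only [mulVecLin_apply, mulVec, dotProduct]
  by_cases hx : x ∈ S
  · rw [Set.indicator_of_mem hx]
    refine Finset.sum_congr rfl fun y _ => ?_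
    by_cases hy : y ∈ S
    · rw [Set.indicator_of_mem hy]
    · rw [Set.indicator_of_notMem hy, mul_zero]
      exact (mul_eq_zero_of_left (hS x hx y hy) _).symm
  · rw [Set.indicator_of_notMem hx]
    refine Finset.sum_eq_zero fun y _ => ?_
    by_cases hy : y ∈ S
    · rw [← hH.apply, hS y hy x hx, star_zero, zero_mul]
    · rw [Set.indicator_of_notMem hy, mul_zero]

lemma apply_eq_zero_of_indicator_mem (hH : P.IsHermitian) (hP : LinearMap.IsProj V P.mulVecLin)
    {S : Set Λ} (hS : ∀ v ∈ V, S.indicator v ∈ V) {x y : Λ} (hx : x ∈ S) (hy : y ∉ S) :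
    P x y = 0 := by
  set w := S.indicator (P.col y)
  have hw : w ∈ V := hS _ (col_mem_of_isProj hP y)
  have hww : star w ⬝ᵥ w = 0 :=
    calc star w ⬝ᵥ w = star (P.col y) ⬝ᵥ w := by
          refine Finset.sum_congr rfl fun z _ => ?_
          by_cases hz : z ∈ S <;> simp [w, hz]
      _ = w y := (apply_eq_star_col_dotProduct hH hP hw y).symm
      _ = 0 := Set.indicator_of_notMem hy _
  simpa [w, hx] using congrFun (dotProduct_star_self_eq_zero.1 hww) x

lemma matrixReducibleOn_iff (hH : P.IsHermitian) (hP : LinearMap.IsProj V P.mulVecLin) :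
    MatrixReducibleOn {x | P x x ≠ 0} P ↔
      ∃ S : Set Λ, (∀ v ∈ V, S.indicator v ∈ V) ∧ (∃ x ∈ S, P x x ≠ 0) ∧ ∃ x ∉ S, P x x ≠ 0 := by
  constructor
  · rintro ⟨S₁, S₂, hU, hD, ⟨x₁, hx₁⟩, ⟨x₂, hx₂⟩, hblk⟩
    have hΛ₀ : ∀ x, x ∈ S₁ ∨ x ∈ S₂ ↔ P x x ≠ 0 := fun x => Set.ext_iff.1 hU x
    refine ⟨S₁, fun v => indicator_mem_of_forall_apply_eq_zero hH hP fun x hx y hy => ?_,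
      ⟨x₁, hx₁, (hΛ₀ x₁).1 (.inl hx₁)⟩,
      ⟨x₂, Set.disjoint_right.1 hD hx₂, (hΛ₀ x₂).1 (.inr hx₂)⟩⟩
    by_cases hyy : P y y = 0
    · rw [← hH.apply, star_eq_zero]
      exact apply_eq_zero_of_diag_eq_zero_s11 hH hP hyy (col_mem_of_isProj hP x)
    · exact hblk x hx y (((hΛ₀ y).2 hyy).resolve_left hy)
  · rintro ⟨S, hS, ⟨x₁, hx₁S, hx₁⟩, ⟨x₂, hx₂S, hx₂⟩⟩
    exact ⟨{x | P x x ≠ 0} ∩ S, {x | P x x ≠ 0} \ S, Set.inter_union_sdiff _ _,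
      Set.disjoint_sdiff_inter.symm, ⟨x₁, hx₁, hx₁S⟩, ⟨x₂, hx₂, hx₂S⟩,
      fun _ hx _ hy => apply_eq_zero_of_indicator_mem hH hP hS hx.2 hy.2⟩

end IsHermitian

end Matrix

section Span

variable {μ : ι → Λ → ℂ} {s : Set ι}

lemma exists_apply_ne_zero_of_mem_span {v : Λ → ℂ} (hv : v ∈ span ℂ (μ '' s)) {x : Λ}
    (hx : v x ≠ 0) : ∃ z ∈ s, μ z x ≠ 0 := by
  by_contra! h
  have hle : span ℂ (μ '' s) ≤ LinearMap.ker (LinearMap.proj x) :=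
    span_le.2 (by rintro _ ⟨z, hz, rfl⟩; exact h z hz)
  exact hx (hle hv)

lemma indicator_mem_span_of_separatesSupports {S : Set Λ} (h : SeparatesSupports S s μ)
    {v : Λ → ℂ} (hv : v ∈ span ℂ (μ '' s)) : S.indicator v ∈ span ℂ (μ '' s) := by
  induction hv using span_induction with
  | mem _ hw =>
    obtain ⟨z, hz, rfl⟩ := hw
    rcases h z hz with hsub | hdisj
    · rw [Set.indicator_eq_self.2 hsub]
      exact subset_span (Set.mem_image_of_mem μ hz)
    · rw [Set.indicator_eq_zero'.2 hdisj]
      exact zero_mem _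
  | zero => simp
  | add _ _ _ _ hv hw => rw [Set.indicator_add']; exact add_mem hv hw
  | smul c w _ hv =>
    convert smul_mem _ c hv using 1
    exact Set.indicator_const_smul S c w

lemma diag_ne_zero_iff_exists_apply_ne_zero [Fintype Λ] {P : Matrix Λ Λ ℂ} (hH : P.IsHermitian)
    (hP : LinearMap.IsProj (span ℂ (μ '' s)) P.mulVecLin) {x : Λ} :
    P x x ≠ 0 ↔ ∃ z ∈ s, μ z x ≠ 0 :=
  (hH.diag_ne_zero_iff hP).trans
    ⟨fun ⟨_, hv, hvx⟩ => exists_apply_ne_zero_of_mem_span hv hvx,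
      fun ⟨z, hz, hzx⟩ => ⟨μ z, subset_span (Set.mem_image_of_mem μ hz), hzx⟩⟩

end Span

lemma not_familyConnected_iff {I : Finset Λ} {μ : Λ → Λ → ℂ} (hne : ∀ z ∈ I, μ z ≠ 0) :
    ¬FamilyConnected I μ ↔ ∃ S : Set Λ, SeparatesSupports S I μ ∧
      (∃ a ∈ I, ¬Disjoint (support (μ a)) S) ∧ ∃ b ∈ I, ¬support (μ b) ⊆ S := by
  set R : Λ → Λ → Prop := fun a b => a ∈ I ∧ b ∈ I ∧ ∃ x, μ a x * μ b x ≠ 0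
  constructor
  · intro h
    simp only [FamilyConnected, not_forall] at h
    obtain ⟨a, ha, b, hb, hab⟩ := h
    set S : Set Λ := {x | ∃ z ∈ I, Relation.ReflTransGen R a z ∧ μ z x ≠ 0}
    have hsep : ∀ z ∈ I, ¬Relation.ReflTransGen R a z → Disjoint (support (μ z)) S := by
      refine fun z hz haz => Set.disjoint_left.2 ?_
      rintro x hzx ⟨w, hw, haw, hwx⟩
      exact haz (haw.tail ⟨hw, hz, x, mul_ne_zero hwx hzx⟩)
    refine ⟨S, fun z hz => ?_, ⟨a, ha, ?_⟩, ⟨b, hb, ?_⟩⟩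
    · by_cases haz : Relation.ReflTransGen R a z
      · exact .inl fun x hx => ⟨z, hz, haz, hx⟩
      · exact .inr (hsep z hz haz)
    · obtain ⟨x, hx⟩ := Function.ne_iff.1 (hne a ha)
      exact Set.not_disjoint_iff.2 ⟨x, hx, a, ha, .refl, hx⟩
    · obtain ⟨x, hx⟩ := Function.ne_iff.1 (hne b hb)
      exact fun hsub => Set.disjoint_left.1 (hsep b hb hab) hx (hsub hx)
  · rintro ⟨S, hS, ⟨a, ha, haS⟩, ⟨b, hb, hbS⟩⟩ hconn
    have hreach : ∀ z, Relation.ReflTransGen R a z → support (μ z) ⊆ S := by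
      intro z haz
      induction haz with
      | refl => exact (hS a ha).resolve_right haS
      | tail _ hstep ih =>
        obtain ⟨-, hq, x, hx⟩ := hstep
        exact (hS _ hq).resolve_right (Set.not_disjoint_iff.2
          ⟨x, right_ne_zero_of_mul hx, ih (left_ne_zero_of_mul hx)⟩)
    exact hbS (hreach b (hconn a ha b hb))

structure IsAdapted (I : Finset Λ) (μ : Λ → Λ → ℂ) : Prop where
  apply_self_ne_zero : ∀ z ∈ I, μ z z ≠ 0
  apply_eq_zero_of_ne : ∀ z ∈ I, ∀ z' ∈ I, z' ≠ z → μ z z' = 0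

namespace IsAdapted

variable {I : Finset Λ} {μ : Λ → Λ → ℂ}

lemma ne_zero (hμ : IsAdapted I μ) {z : Λ} (hz : z ∈ I) : μ z ≠ 0 :=
  fun h => hμ.apply_self_ne_zero z hz (congrFun h z)

lemma eq_zero_of_mem_span (hμ : IsAdapted I μ) {v : Λ → ℂ} (hv : v ∈ span ℂ (μ '' ↑I))
    (h : ∀ z ∈ I, v z = 0) : v = 0 := by
  obtain ⟨c, rfl⟩ := (mem_span_image_finset_iff_exists_fun' ℂ).1 hv
  have hc : ∀ z ∈ I, c z = 0 := fun z hz => by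
    have hcz : c z * μ z z = 0 := by
      rw [← h z hz, Finset.sum_apply, Finset.sum_eq_single z
        (fun w hw hwz => by simp [hμ.apply_eq_zero_of_ne w hw z hz hwz.symm]) (absurd hz)]
      rfl
    exact (mul_eq_zero.1 hcz).resolve_right (hμ.apply_self_ne_zero z hz)
  exact Finset.sum_eq_zero fun z hz => by rw [hc z hz, zero_smul]

lemma disjoint_support_of_indicator_mem_span (hμ : IsAdapted I μ) {S : Set Λ} {z : Λ}
    (hz : z ∈ I) (hzS : z ∉ S) (h : S.indicator (μ z) ∈ span ℂ (μ '' ↑I)) :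
    Disjoint (support (μ z)) S := by
  rw [← Set.indicator_eq_zero']
  refine hμ.eq_zero_of_mem_span h fun z' hz' => ?_
  rcases eq_or_ne z' z with rfl | hne
  · exact Set.indicator_of_notMem hzS _
  · exact Set.indicator_apply_eq_zero.2 fun _ => hμ.apply_eq_zero_of_ne z hz z' hz' hne

lemma indicator_mem_span_iff (hμ : IsAdapted I μ) {S : Set Λ} :
    (∀ v ∈ span ℂ (μ '' ↑I), S.indicator v ∈ span ℂ (μ '' ↑I)) ↔ SeparatesSupports S I μ := by
  refine ⟨fun h z hz => ?_, fun h _ => indicator_mem_span_of_separatesSupports h⟩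
  have hμz : μ z ∈ span ℂ (μ '' ↑I) := subset_span (Set.mem_image_of_mem μ hz)
  by_cases hzS : z ∈ S
  · refine .inl (Set.disjoint_compl_right_iff_subset.1 ?_)
    refine hμ.disjoint_support_of_indicator_mem_span hz (not_not_intro hzS) ?_
    rw [Set.indicator_compl]
    exact sub_mem hμz (h _ hμz)
  · exact .inr (hμ.disjoint_support_of_indicator_mem_span hz hzS (h _ hμz))

lemma matrixReducibleOn_iff [Fintype Λ] {P : Matrix Λ Λ ℂ} (hμ : IsAdapted I μ)
    (hH : P.IsHermitian) (hP : LinearMap.IsProj (span ℂ (μ '' ↑I)) P.mulVecLin) :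
    MatrixReducibleOn {x | P x x ≠ 0} P ↔ ∃ S : Set Λ, SeparatesSupports S I μ ∧
      (∃ a ∈ I, ¬Disjoint (support (μ a)) S) ∧ ∃ b ∈ I, ¬support (μ b) ⊆ S := by
  rw [hH.matrixReducibleOn_iff hP]
  refine exists_congr fun S => and_congr hμ.indicator_mem_span_iff ?_
  simp only [diag_ne_zero_iff_exists_apply_ne_zero hH hP, Set.not_disjoint_iff, Set.not_subset,
    mem_support]
  exact and_congr (by grind) (by grind)

end IsAdapted

end

theorem irreducible_iff_adapted_basis_connected_general {Λ : Type*} [Fintype Λ]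
    (h0 : Submodule ℂ (Λ → ℂ))
    (P₀ : Matrix Λ Λ ℂ)
    (hH : P₀.conjTranspose = P₀)
    (hmem : ∀ v : Λ → ℂ, P₀.mulVec v ∈ h0) (hfix : ∀ v ∈ h0, P₀.mulVec v = v)
    (I : Finset Λ) (μ : Λ → (Λ → ℂ))
    (hspan : Submodule.span ℂ (μ '' ↑I) = h0)
    (hdiag : ∀ z ∈ I, μ z z ≠ 0)
    (hoff : ∀ z ∈ I, ∀ z' ∈ I, z' ≠ z → μ z z' = 0) :
    ¬ MatrixReducibleOn {x : Λ | P₀ x x ≠ 0} P₀ ↔ FamilyConnected I μ := by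
  subst hspan
  have hμ : IsAdapted I μ := ⟨hdiag, hoff⟩
  rw [not_iff_comm, not_familyConnected_iff fun z hz => hμ.ne_zero hz]
  exact (hμ.matrixReducibleOn_iff hH ⟨hmem, hfix⟩).symm

/-- **Lemma 3.**  Let `T` be a Hermitian positive semidefinite matrix on a nonempty
finite set `Λ`, `𝔥₀ = ker T` with `dim 𝔥₀ ≥ 1`, `P₀` the orthogonal projection matrix
onto `𝔥₀`, and `Λ₀ = {x : (P₀)_{x,x} ≠ 0}`.  For every adapted basis `(I, {μ_z}_{z∈I})`
of `𝔥₀`, the matrix `((P₀)_{x,y})_{x,y∈Λ₀}` is irreducible iff the family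
`{μ_z}_{z∈I}` is connected. -/
theorem irreducible_iff_adapted_basis_connected {Λ : Type*} [Fintype Λ] [DecidableEq Λ]
    [Nonempty Λ] (T : Matrix Λ Λ ℂ) (hT : T.PosSemidef)
    (h0 : Submodule ℂ (Λ → ℂ)) (hh0 : h0 = LinearMap.ker T.mulVecLin)
    (hD0pos : 1 ≤ Module.finrank ℂ h0)
    (P₀ : Matrix Λ Λ ℂ)
    (hH : P₀.conjTranspose = P₀) (hPP : P₀ * P₀ = P₀)
    (hmem : ∀ v : Λ → ℂ, P₀.mulVec v ∈ h0) (hfix : ∀ v ∈ h0, P₀.mulVec v = v)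
    (I : Finset Λ) (μ : Λ → (Λ → ℂ))
    (hcard : I.card = Module.finrank ℂ h0)
    (hbmem : ∀ z ∈ I, μ z ∈ h0)
    (hli : LinearIndependent ℂ (fun z : I => μ z))
    (hspan : Submodule.span ℂ (μ '' ↑I) = h0)
    (hdiag : ∀ z ∈ I, μ z z ≠ 0)
    (hoff : ∀ z ∈ I, ∀ z' ∈ I, z' ≠ z → μ z z' = 0) :
    ¬ MatrixReducibleOn {x : Λ | P₀ x x ≠ 0} P₀ ↔ FamilyConnected I μ :=
  irreducible_iff_adapted_basis_connected_general h0 P₀ hH hmem hfix I μ hspan hdiag hoff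
end

section
/- If (I, {μ_z}_{z∈I}) and (J, {ν_w}_{w∈J}) are both adapted bases of 𝔥₀, then {μ_z}_{z∈I} is connected if and only if {ν_w}_{w∈J} is connected. -/
/-!
Connectedness of an adapted basis of `V` turns out to be a property of `V` alone: the family
is connected iff every coordinate projection `φ ↦ 1_A φ` that maps `V` into itself acts on `V`
as `0` or as the identity. If `1_A` preserves `V`, then `1_A ν_w ∈ V` vanishes on `J \ {w}`, so
it is the multiple of `ν_w` read off at `w`: it is `ν_w` if `w ∈ A` and `0` otherwise. Hence
`ν_w` is supported in `A` iff `w ∈ A`, and this membership is shared by `∼`-neighbours.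
Conversely, the union of the supports of one connected component is a set `A` whose projection
preserves `V` and acts on it nontrivially.
-/

open scoped ComplexOrder

section

open Finset Submodule

variable {Λ K : Type*}

structure IsAdapted_s12 [Zero K] (J : Finset Λ) (ν : Λ → Λ → K) : Prop where
  apply_self_ne_zero : ∀ w ∈ J, ν w w ≠ 0
  apply_of_ne : ∀ w ∈ J, ∀ w' ∈ J, w' ≠ w → ν w w' = 0

section Adapted

variable [Field K] {J : Finset Λ} {ν : Λ → Λ → K}

theorem IsAdapted_s12.eq_sum_of_mem_span (hν : IsAdapted_s12 J ν) {φ : Λ → K}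
    (hφ : φ ∈ span K (ν '' J)) : φ = ∑ w ∈ J, (φ w / ν w w) • ν w := by
  induction hφ using span_induction with
  | mem _ hx =>
    obtain ⟨u, hu, rfl⟩ := hx
    rw [sum_eq_single_of_mem u hu ?_, div_self (hν.apply_self_ne_zero u hu), one_smul]
    intro w hw hwu
    rw [hν.apply_of_ne u hu w hw hwu, zero_div, zero_smul]
  | zero => simp
  | add x y _ _ hx hy =>
    conv_lhs => rw [hx, hy]
    simp only [Pi.add_apply, add_div, add_smul, sum_add_distrib]
  | smul a x _ hx =>
    conv_lhs => rw [hx]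
    simp only [smul_sum, Pi.smul_apply, smul_eq_mul, mul_div_assoc, smul_smul]

theorem IsAdapted_s12.eq_smul_of_mem_span (hν : IsAdapted_s12 J ν) {w : Λ} (hw : w ∈ J) {φ : Λ → K}
    (hφ : φ ∈ span K (ν '' J)) (hvanish : ∀ w' ∈ J, w' ≠ w → φ w' = 0) :
    φ = (φ w / ν w w) • ν w := by
  conv_lhs => rw [hν.eq_sum_of_mem_span hφ]
  refine sum_eq_single_of_mem w hw fun w' hw' hne => ?_
  rw [hvanish w' hw' hne, zero_div, zero_smul]

end Adapted

section Indicator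

variable {R M : Type*} [Semiring R] [AddCommMonoid M] [Module R M]

noncomputable def Set.indicatorLinearMap (A : Set Λ) : (Λ → M) →ₗ[R] (Λ → M) where
  toFun := A.indicator
  map_add' := Set.indicator_add' A
  map_smul' c φ := Set.indicator_const_smul A c φ

def Submodule.IsIndicatorIrreducible (V : Submodule R (Λ → M)) : Prop :=
  ∀ A : Set Λ, (∀ φ ∈ V, A.indicator φ ∈ V) →
    (∀ φ ∈ V, A.indicator φ = 0) ∨ ∀ φ ∈ V, A.indicator φ = φ

end Indicator

section AdaptedIndicator

variable [Field K] {J : Finset Λ} {ν : Λ → Λ → K} {A : Set Λ}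

open Classical in
theorem IsAdapted_s12.indicator_eq_ite (hν : IsAdapted_s12 J ν)
    (hA : ∀ φ ∈ span K (ν '' J), A.indicator φ ∈ span K (ν '' J)) {w : Λ} (hw : w ∈ J) :
    A.indicator (ν w) = if w ∈ A then ν w else 0 := by
  have hsmul := hν.eq_smul_of_mem_span hw (hA _ (subset_span ⟨w, hw, rfl⟩))
    fun w' hw' hne => by simp [hν.apply_of_ne w hw w' hw' hne]
  split_ifs with hwA
  · rwa [Set.indicator_of_mem hwA, div_self (hν.apply_self_ne_zero w hw), one_smul] at hsmul
  · rwa [Set.indicator_of_notMem hwA, zero_div, zero_smul] at hsmul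

theorem IsAdapted_s12.mem_iff_mem_of_apply_ne_zero (hν : IsAdapted_s12 J ν)
    (hA : ∀ φ ∈ span K (ν '' J), A.indicator φ ∈ span K (ν '' J)) {w x : Λ} (hw : w ∈ J)
    (hx : ν w x ≠ 0) : w ∈ A ↔ x ∈ A := by
  have hwx := congrFun (hν.indicator_eq_ite hA hw) x
  by_cases hwA : w ∈ A <;> by_cases hxA : x ∈ A <;>
    simp_all [Set.indicator_of_mem, Set.indicator_of_notMem]

end AdaptedIndicator

section Connected

variable {J : Finset Λ} {ν : Λ → Λ → ℂ}

theorem FamilyConnected.isIndicatorIrreducible (hconn : FamilyConnected J ν)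
    (hν : IsAdapted_s12 J ν) : (span ℂ (ν '' J)).IsIndicatorIrreducible := by
  intro A hA
  have hsame : ∀ w ∈ J, ∀ w' ∈ J, w ∈ A ↔ w' ∈ A := by
    intro w hw w' hw'
    induction hconn w hw w' hw' with
    | refl => rfl
    | tail _ hstep ih =>
      obtain ⟨hb, hc, x, hx⟩ := hstep
      exact (ih hb).trans
        ((hν.mem_iff_mem_of_apply_ne_zero hA hb (left_ne_zero_of_mul hx)).trans
          (hν.mem_iff_mem_of_apply_ne_zero hA hc (right_ne_zero_of_mul hx)).symm)
  by_cases hJA : ∃ w ∈ J, w ∈ A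
  · obtain ⟨w₀, hw₀, hw₀A⟩ := hJA
    refine .inr fun φ hφ => LinearMap.eqOn_span (f := Set.indicatorLinearMap A)
      (g := LinearMap.id) ?_ hφ
    rintro _ ⟨w, hw, rfl⟩
    exact (hν.indicator_eq_ite hA hw).trans (if_pos ((hsame w₀ hw₀ w hw).1 hw₀A))
  · push Not at hJA
    refine .inl fun φ hφ => LinearMap.eqOn_span (f := Set.indicatorLinearMap A) (g := 0) ?_ hφ
    rintro _ ⟨w, hw, rfl⟩
    exact (hν.indicator_eq_ite hA hw).trans (if_neg (hJA w hw))

theorem familyConnected_of_isIndicatorIrreducible (hν : ∀ w ∈ J, ν w ≠ 0)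
    (hV : (span ℂ (ν '' J)).IsIndicatorIrreducible) : FamilyConnected J ν := by
  intro w₀ hw₀ w₁ hw₁
  by_contra hnot
  set S : Set Λ :=
    {u | Relation.ReflTransGen (fun a b => a ∈ J ∧ b ∈ J ∧ ∃ x, ν a x * ν b x ≠ 0) w₀ u}
  set A : Set Λ := {x | ∃ u ∈ J, u ∈ S ∧ ν u x ≠ 0}
  have hin : ∀ u ∈ J, u ∈ S → A.indicator (ν u) = ν u := fun u hu huS =>
    Set.indicator_eq_self.2 fun x hx => ⟨u, hu, huS, hx⟩
  have hout : ∀ u ∈ J, u ∉ S → A.indicator (ν u) = 0 := fun u hu huS =>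
    Set.indicator_eq_zero.2 <| Set.disjoint_left.2 fun x hx ⟨u', hu', hu'S, hx'⟩ =>
      huS (hu'S.tail ⟨hu', hu, x, mul_ne_zero hx' hx⟩)
  have hA : ∀ φ ∈ span ℂ (ν '' J), A.indicator φ ∈ span ℂ (ν '' J) := by
    refine span_le (p := (span ℂ (ν '' J)).comap (Set.indicatorLinearMap A)).2 ?_
    rintro _ ⟨u, hu, rfl⟩
    change A.indicator (ν u) ∈ span ℂ (ν '' J)
    by_cases huS : u ∈ S
    · rw [hin u hu huS]
      exact subset_span ⟨u, hu, rfl⟩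
    · rw [hout u hu huS]
      exact zero_mem _
  rcases hV A hA with hzero | hid
  · exact hν w₀ hw₀ ((hin w₀ hw₀ .refl).symm.trans (hzero _ (subset_span ⟨w₀, hw₀, rfl⟩)))
  · exact hν w₁ hw₁ ((hid _ (subset_span ⟨w₁, hw₁, rfl⟩)).symm.trans (hout w₁ hw₁ hnot))

theorem IsAdapted_s12.familyConnected_iff (hν : IsAdapted_s12 J ν) :
    FamilyConnected J ν ↔ (span ℂ (ν '' J)).IsIndicatorIrreducible :=
  ⟨fun h => h.isIndicatorIrreducible hν, familyConnected_of_isIndicatorIrreducible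
    fun w hw h0 => hν.apply_self_ne_zero w hw (by simp [h0])⟩

end Connected

end

theorem adapted_basis_connected_well_defined_general {Λ : Type*}
    (h0 : Submodule ℂ (Λ → ℂ))
    (I J : Finset Λ) (μ ν : Λ → (Λ → ℂ))
    (hspanI : Submodule.span ℂ (μ '' ↑I) = h0)
    (hdiagI : ∀ z ∈ I, μ z z ≠ 0)
    (hoffI : ∀ z ∈ I, ∀ z' ∈ I, z' ≠ z → μ z z' = 0)
    (hspanJ : Submodule.span ℂ (ν '' ↑J) = h0)
    (hdiagJ : ∀ w ∈ J, ν w w ≠ 0)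
    (hoffJ : ∀ w ∈ J, ∀ w' ∈ J, w' ≠ w → ν w w' = 0) :
    FamilyConnected I μ ↔ FamilyConnected J ν := by
  rw [IsAdapted_s12.familyConnected_iff ⟨hdiagI, hoffI⟩, hspanI,
    IsAdapted_s12.familyConnected_iff ⟨hdiagJ, hoffJ⟩, hspanJ]

/-- Let `T` be a Hermitian positive semidefinite matrix on a nonempty finite set `Λ`
and `𝔥₀ = ker T` with `dim 𝔥₀ = D₀ ≥ 1`.  If `(I, {μ_z}_{z∈I})` and `(J, {ν_w}_{w∈J})`
are both adapted bases of `𝔥₀`, then `{μ_z}_{z∈I}` is connected iff `{ν_w}_{w∈J}` is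
connected. -/
theorem adapted_basis_connected_well_defined {Λ : Type*} [Fintype Λ] [DecidableEq Λ]
    [Nonempty Λ] (T : Matrix Λ Λ ℂ) (hT : T.PosSemidef)
    (h0 : Submodule ℂ (Λ → ℂ)) (hh0 : h0 = LinearMap.ker T.mulVecLin)
    (hD0pos : 1 ≤ Module.finrank ℂ h0)
    (I J : Finset Λ) (μ ν : Λ → (Λ → ℂ))
    (hcardI : I.card = Module.finrank ℂ h0)
    (hmemI : ∀ z ∈ I, μ z ∈ h0)
    (hliI : LinearIndependent ℂ (fun z : I => μ z))
    (hspanI : Submodule.span ℂ (μ '' ↑I) = h0)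
    (hdiagI : ∀ z ∈ I, μ z z ≠ 0)
    (hoffI : ∀ z ∈ I, ∀ z' ∈ I, z' ≠ z → μ z z' = 0)
    (hcardJ : J.card = Module.finrank ℂ h0)
    (hmemJ : ∀ w ∈ J, ν w ∈ h0)
    (hliJ : LinearIndependent ℂ (fun w : J => ν w))
    (hspanJ : Submodule.span ℂ (ν '' ↑J) = h0)
    (hdiagJ : ∀ w ∈ J, ν w w ≠ 0)
    (hoffJ : ∀ w ∈ J, ∀ w' ∈ J, w' ≠ w → ν w w' = 0) :
    FamilyConnected I μ ↔ FamilyConnected J ν :=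
  adapted_basis_connected_well_defined_general h0 I J μ ν hspanI hdiagI hoffI hspanJ hdiagJ hoffJ
end

section
/- The delta-chain hopping matrix T is Hermitian positive semidefinite, and T μ_z = 0 for every z ∈ ℤ/Lℤ. -/
open scoped ComplexOrder

/-- The hopping matrix of the delta chain with `L` unit cells and hopping parameter `t`.
The lattice is `Λ = (ℤ/Lℤ) ⊕ (ℤ/Lℤ)`; `Sum.inl j` is the black site `b_j` and
`Sum.inr j` the white site `w_j`.  The entries are: on-site potentials
`T_{b_j,b_j} = T_{w_j,w_j} = t`; black-black hoppings `T_{b_j,b_{j±1}} = t/2`;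
black-white hoppings `T_{b_j,w_j} = T_{b_{j+1},w_j} = t/√2` (and their transposes);
all other entries vanish. -/
noncomputable def deltaChainT (L : ℕ) (t : ℝ) :
    Matrix (ZMod L ⊕ ZMod L) (ZMod L ⊕ ZMod L) ℂ := fun p q =>
  match p, q with
  | Sum.inl j, Sum.inl k =>
      if j = k then (t : ℂ) else if k = j + 1 ∨ j = k + 1 then ((t / 2 : ℝ) : ℂ) else 0
  | Sum.inl j, Sum.inr k =>
      if j = k ∨ j = k + 1 then ((t / Real.sqrt 2 : ℝ) : ℂ) else 0
  | Sum.inr j, Sum.inl k =>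
      if k = j ∨ k = j + 1 then ((t / Real.sqrt 2 : ℝ) : ℂ) else 0
  | Sum.inr j, Sum.inr k => if j = k then (t : ℂ) else 0

/-- The localized zero-energy vector `μ_z` of the delta chain: it has value `1` at the
black site `b_z`, value `−1/√2` at the adjacent white sites `w_z` and `w_{z−1}`, and
`0` elsewhere. -/
noncomputable def deltaChainMu (L : ℕ) (z : ZMod L) : (ZMod L ⊕ ZMod L) → ℂ := fun p =>
  match p with
  | Sum.inl j => if j = z then (1 : ℂ) else 0
  | Sum.inr j => if j = z ∨ j = z - 1 then ((-(1 / Real.sqrt 2) : ℝ) : ℂ) else 0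

/-!
The matrix `T` is the Gram matrix `Bᴴ B` of the map `B : ℂ^Λ → ℂ^(ℤ/Lℤ)` that reads off each
triangle `(b_m, b_{m+1}, w_m)` of the chain,
`(B ψ)_m = √(t/2) (ψ(b_m) + ψ(b_{m+1})) + √t ψ(w_m)`.
In block form `B = [√(t/2) (1 + S) | √t]` with `S` the cyclic shift, and `Bᴴ B = T` because
`Sᴴ S = 1`; this needs `1 ≠ 0` and `2 ≠ 0` in `ℤ/Lℤ`, i.e. `L ≥ 3`, so that the entries of
`1`, `S` and `Sᴴ` do not overlap. Hence `T` is positive semidefinite, and `μ_z` already lies in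
the kernel of `B`: each triangle through `b_z` contains exactly one of `w_z`, `w_{z-1}`, and the
two contributions `√(t/2) · 1` and `√t · (-1/√2)` cancel.
-/

open Matrix

lemma ite_or_eq_ite_add_ite {α : Type*} [AddZeroClass α] {p q : Prop} [Decidable p] [Decidable q]
    (h : ¬(p ∧ q)) (a : α) :
    (if p ∨ q then a else 0) = (if p then a else 0) + (if q then a else 0) := by
  by_cases hp : p <;> by_cases hq : q <;> simp_all

lemma ZMod.two_ne_zero_of_three_le {L : ℕ} (hL : 3 ≤ L) : (2 : ZMod L) ≠ 0 := by
  intro h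
  simpa [h] using ZMod.val_ofNat_of_lt (n := L) (a := 2) (by omega)

section PermMatrix

variable {n R : Type*} [Fintype n] [DecidableEq n] [Semiring R] [StarRing R] (σ : Equiv.Perm n)

lemma conjTranspose_permMatrix_mul_self : (σ.permMatrix R)ᴴ * σ.permMatrix R = 1 := by
  rw [conjTranspose_permMatrix, ← permMatrix_mul, mul_inv_cancel, permMatrix_one]

lemma conjTranspose_mul_self_fromCols_permMatrix [Algebra ℝ R] [StarModule ℝ R] (a b : ℝ) :
    (fromCols (a • (1 + σ.permMatrix R)) (b • 1))ᴴ * fromCols (a • (1 + σ.permMatrix R)) (b • 1)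
      = fromBlocks ((a ^ 2) • (2 + σ.permMatrix R + (σ.permMatrix R)ᴴ))
          ((a * b) • (1 + (σ.permMatrix R)ᴴ)) ((a * b) • (1 + σ.permMatrix R)) ((b ^ 2) • 1) := by
  set P := σ.permMatrix R
  have hGram : (1 + Pᴴ) * (1 + P) = 2 + P + Pᴴ := by
    rw [add_mul, mul_add, mul_add, conjTranspose_permMatrix_mul_self, Matrix.one_mul,
      Matrix.one_mul, Matrix.mul_one, ← one_add_one_eq_two]
    abel
  rw [conjTranspose_fromCols_eq_fromRows_conjTranspose, fromRows_mul_fromCols]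
  simp only [conjTranspose_smul, star_trivial, conjTranspose_add, conjTranspose_one,
    smul_mul_smul_comm, hGram, Matrix.mul_one, Matrix.one_mul, mul_comm b a, pow_two]

end PermMatrix

noncomputable def cyclicShift (L : ℕ) : Matrix (ZMod L) (ZMod L) ℂ :=
  (Equiv.addRight (1 : ZMod L)).permMatrix ℂ

noncomputable def deltaChainB (L : ℕ) (t : ℝ) : Matrix (ZMod L) (ZMod L ⊕ ZMod L) ℂ :=
  fromCols ((√t / √2) • (1 + cyclicShift L)) (√t • 1)

section DeltaChain

variable {L : ℕ}

lemma cyclicShift_apply (j k : ZMod L) : cyclicShift L j k = if k = j + 1 then 1 else 0 := by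
  simp [cyclicShift, PEquiv.toMatrix_apply, eq_comm]

lemma conjTranspose_cyclicShift_apply (j k : ZMod L) :
    (cyclicShift L)ᴴ j k = if j = k + 1 then 1 else 0 := by
  simp [conjTranspose_apply, cyclicShift_apply, apply_ite]

lemma deltaChainT_eq_fromBlocks (hL : 3 ≤ L) (t : ℝ) :
    deltaChainT L t = fromBlocks ((t / 2) • (2 + cyclicShift L + (cyclicShift L)ᴴ))
      ((t / √2) • (1 + (cyclicShift L)ᴴ)) ((t / √2) • (1 + cyclicShift L)) (t • 1) := by
  have h2 := ZMod.two_ne_zero_of_three_le hL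
  have h1 : (1 : ZMod L) ≠ 0 := fun h => h2 (by rw [← one_add_one_eq_two, h, add_zero])
  have hsucc (j : ZMod L) : j ≠ j + 1 := fun h => h1 (by linear_combination -h)
  ext (j | j) (k | k) <;>
    simp only [deltaChainT, fromBlocks_apply₁₁, fromBlocks_apply₁₂, fromBlocks_apply₂₁,
      fromBlocks_apply₂₂, Matrix.smul_apply, Matrix.add_apply, one_apply, Matrix.ofNat_apply,
      cyclicShift_apply, conjTranspose_cyclicShift_apply, Complex.real_smul, mul_add, mul_ite,
      mul_one, mul_zero]
  · by_cases hjk : j = k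
    · subst hjk
      simp [hsucc]
    · rw [if_neg hjk, if_neg hjk, Nat.cast_zero, mul_zero, zero_add,
        ite_or_eq_ite_add_ite fun h => h2 (by linear_combination -h.1 - h.2)]
  · exact ite_or_eq_ite_add_ite (fun h => hsucc k (h.1.symm.trans h.2)) _
  · rw [ite_or_eq_ite_add_ite (fun h => hsucc j (h.1.symm.trans h.2))]
    simp only [@eq_comm _ k j]

lemma deltaChainMu_eq_sumElim (z : ZMod L) :
    deltaChainMu L z = Sum.elim (fun j => if j = z then 1 else 0)
      (fun j => if j = z ∨ j = z - 1 then ((-(1 / √2) : ℝ) : ℂ) else 0) := by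
  ext (j | j) <;> rfl

variable [NeZero L]

lemma deltaChainT_eq_conjTranspose_mul_self (hL : 3 ≤ L) {t : ℝ} (ht : 0 ≤ t) :
    deltaChainT L t = (deltaChainB L t)ᴴ * deltaChainB L t := by
  have hs2 : √2 ^ 2 = 2 := Real.sq_sqrt zero_le_two
  have hst : √t ^ 2 = t := Real.sq_sqrt ht
  rw [deltaChainT_eq_fromBlocks hL, deltaChainB, cyclicShift,
    conjTranspose_mul_self_fromCols_permMatrix, div_pow, hs2, hst, div_mul_eq_mul_div,
    ← pow_two, hst]

lemma deltaChainB_mulVec_deltaChainMu (hL : 1 < L) (t : ℝ) (z : ZMod L) :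
    deltaChainB L t *ᵥ deltaChainMu L z = 0 := by
  have : Fact (1 < L) := ⟨hL⟩
  ext j
  have hshift : j + 1 = z ↔ j = z - 1 := eq_sub_iff_add_eq.symm
  rw [deltaChainMu_eq_sumElim, deltaChainB, fromCols_mulVec_sumElim, smul_mulVec, smul_mulVec,
    add_mulVec, one_mulVec, one_mulVec, cyclicShift, permMatrix_mulVec]
  simp only [Pi.add_apply, Pi.smul_apply, Pi.zero_apply, Function.comp_apply,
    Equiv.coe_addRight, hshift]
  have h1 : (1 : ZMod L) ≠ 0 := one_ne_zero
  rw [ite_or_eq_ite_add_ite fun h => h1 (by linear_combination h.2 - h.1)]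
  split_ifs <;> simp [div_eq_mul_inv]

end DeltaChain

/-- The delta-chain hopping matrix `T` is Hermitian positive semidefinite, and
`T μ_z = 0` for every `z ∈ ℤ/Lℤ`. -/
theorem deltaChain_posSemidef_and_kernel (L : ℕ) [NeZero L] (hL : 3 ≤ L)
    (t : ℝ) (ht : 0 < t) :
    (deltaChainT L t).PosSemidef ∧
    ∀ z : ZMod L, (deltaChainT L t).mulVec (deltaChainMu L z) = 0 := by
  rw [deltaChainT_eq_conjTranspose_mul_self hL ht.le]
  refine ⟨posSemidef_conjTranspose_mul_self _, fun z => ?_⟩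
  rw [← mulVec_mulVec, deltaChainB_mulVec_deltaChainMu (by omega) t z, mulVec_zero]
end

section
/- For the delta-chain hopping matrix T: the kernel of T has dimension exactly L; the matrix P₀ of the orthogonal projection of ℂ^Λ onto ker T satisfies (P₀)_{x,x} ≠ 0 for every site x ∈ Λ; and the matrix ((P₀)_{x,y})_{x,y∈Λ} is irreducible. -/
open scoped ComplexOrder

open Matrix

theorem matrixReducibleOn_univ_iff {ι : Type*} {M : Matrix ι ι ℂ} :
    MatrixReducibleOn Set.univ M ↔
      ∃ S : Set ι, S.Nonempty ∧ Sᶜ.Nonempty ∧ ∀ x ∈ S, ∀ y ∉ S, M x y = 0 := by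
  constructor
  · rintro ⟨S₁, S₂, hU, hD, hS₁, hS₂, h0⟩
    obtain rfl : S₁ᶜ = S₂ := IsCompl.compl_eq ⟨hD, codisjoint_iff.mpr hU⟩
    exact ⟨S₁, hS₁, hS₂, h0⟩
  · rintro ⟨S, hS, hSc, h0⟩
    exact ⟨S, Sᶜ, Set.union_compl_self S, disjoint_compl_right, hS, hSc, h0⟩

section Projection

variable {ι : Type*} [Fintype ι] {P : Matrix ι ι ℂ}

theorem row_eq_zero_of_diag_eq_zero (hP : P.IsHermitian) (hPP : P * P = P) {x : ι}
    (hx : P x x = 0) : P x = 0 := by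
  rw [← dotProduct_self_star_eq_zero, ← hx]
  calc P x ⬝ᵥ star (P x) = (P * Pᴴ) x x := rfl
    _ = P x x := by rw [hP.eq, hPP]

theorem mulVec_indicator_of_block (hP : P.IsHermitian) {S : Set ι}
    (hS : ∀ x ∈ S, ∀ y ∉ S, P x y = 0) (v : ι → ℂ) :
    P *ᵥ S.indicator v = S.indicator (P *ᵥ v) := by
  classical
  ext x
  simp only [mulVec, dotProduct]
  by_cases hx : x ∈ S
  · rw [Set.indicator_of_mem hx]
    refine Finset.sum_congr rfl fun y _ => ?_
    by_cases hy : y ∈ S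
    · rw [Set.indicator_of_mem hy]
    · simp [hS x hx y hy]
  · rw [Set.indicator_of_notMem hx]
    refine Finset.sum_eq_zero fun y _ => ?_
    by_cases hy : y ∈ S
    · rw [← hP.apply, hS y hy x hx, star_zero, zero_mul]
    · rw [Set.indicator_of_notMem hy, mul_zero]

theorem not_matrixReducibleOn_univ {K : Submodule ℂ (ι → ℂ)} (hP : P.IsHermitian)
    (hmem : ∀ v, P *ᵥ v ∈ K) (hfix : ∀ v ∈ K, P *ᵥ v = v)
    (hK : ∀ S : Set ι, (∀ v ∈ K, S.indicator v ∈ K) → S = ∅ ∨ S = Set.univ) :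
    ¬ MatrixReducibleOn Set.univ P := by
  rw [matrixReducibleOn_univ_iff]
  rintro ⟨S, hS, hSc, h0⟩
  have hSK : ∀ v ∈ K, S.indicator v ∈ K := fun v hv => by
    rw [← hfix v hv, ← mulVec_indicator_of_block hP h0]
    exact hmem _
  rcases hK S hSK with rfl | rfl
  · exact Set.not_nonempty_empty hS
  · exact hSc.ne_empty Set.compl_univ

theorem diag_ne_zero_of_not_matrixReducibleOn_univ [Nontrivial ι] (hP : P.IsHermitian)
    (hPP : P * P = P) (hirr : ¬ MatrixReducibleOn Set.univ P) (x : ι) : P x x ≠ 0 := by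
  intro hx
  apply hirr
  rw [matrixReducibleOn_univ_iff]
  refine ⟨{x}, Set.singleton_nonempty x, (exists_ne x).imp fun _ => id, ?_⟩
  rintro _ rfl y -
  exact congrFun (row_eq_zero_of_diag_eq_zero hP hPP hx) y

end Projection

theorem ZMod.natCast_ne_zero_of_pos_of_lt {L n : ℕ} (h0 : 0 < n) (h : n < L) :
    (n : ZMod L) ≠ 0 := by
  rw [Ne, ZMod.natCast_eq_zero_iff]
  exact Nat.not_dvd_of_pos_of_lt h0 h

theorem ZMod.iff_zero_of_iff_add_one {L : ℕ} [NeZero L] {p : ZMod L → Prop}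
    (h : ∀ k, p k ↔ p (k + 1)) (j : ZMod L) : p j ↔ p 0 := by
  rw [← ZMod.natCast_zmod_val j]
  induction j.val with
  | zero => rw [Nat.cast_zero]
  | succ n ih => rw [Nat.cast_succ, ← h, ih]

section DeltaChain

variable {L : ℕ}

noncomputable def deltaChainConstraint (L : ℕ) :
    (ZMod L ⊕ ZMod L → ℂ) →ₗ[ℂ] ZMod L → ℂ where
  toFun v j := v (.inl j) + v (.inl (j + 1)) + √2 * v (.inr j)
  map_add' v w := by
    ext j
    simp only [Pi.add_apply]
    ring
  map_smul' c v := by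
    ext j
    simp only [Pi.smul_apply, smul_eq_mul, RingHom.id_apply]
    ring

@[simp]
theorem deltaChainConstraint_apply (v : ZMod L ⊕ ZMod L → ℂ) (j : ZMod L) :
    deltaChainConstraint L v j = v (.inl j) + v (.inl (j + 1)) + √2 * v (.inr j) :=
  rfl

theorem deltaChainT_mulVec_inr [NeZero L] (hL : 2 ≤ L) (t : ℝ) (v : ZMod L ⊕ ZMod L → ℂ)
    (j : ZMod L) :
    (deltaChainT L t *ᵥ v) (.inr j)
      = ((t / √2 : ℝ) : ℂ) * (v (.inl j) + v (.inl (j + 1))) + t * v (.inr j) := by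
  have h1 : (1 : ZMod L) ≠ 0 := by exact_mod_cast ZMod.natCast_ne_zero_of_pos_of_lt one_pos hL
  simp [mulVec, dotProduct, Fintype.sum_sum_type, deltaChainT, ite_or, ite_mul, Finset.sum_ite,
    Finset.filter_eq', h1, mul_add]

theorem deltaChainT_mulVec_inl [NeZero L] (hL : 3 ≤ L) (t : ℝ) (v : ZMod L ⊕ ZMod L → ℂ)
    (j : ZMod L) :
    (deltaChainT L t *ᵥ v) (.inl j)
      = t * v (.inl j) + ((t / 2 : ℝ) : ℂ) * (v (.inl (j + 1)) + v (.inl (j - 1)))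
        + ((t / √2 : ℝ) : ℂ) * (v (.inr j) + v (.inr (j - 1))) := by
  have h1 : (1 : ZMod L) ≠ 0 := by
    exact_mod_cast ZMod.natCast_ne_zero_of_pos_of_lt one_pos (by omega)
  have h2 : (2 : ZMod L) ≠ 0 := by
    exact_mod_cast ZMod.natCast_ne_zero_of_pos_of_lt two_pos (by omega)
  have hpred : ∀ k : ZMod L, j = k + 1 ↔ k = j - 1 := fun k => by rw [eq_sub_iff_add_eq, eq_comm]
  have hj : j ≠ j - 1 := fun h => h1 (by linear_combination h)
  have hj' : j - 1 ≠ j + 1 := fun h => h2 (by linear_combination -h)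
  simp [mulVec, dotProduct, Fintype.sum_sum_type, deltaChainT, ite_or, ite_mul, Finset.sum_ite,
    Finset.filter_eq', Finset.filter_eq, hpred, hj, hj', mul_add, add_assoc]

theorem deltaChainT_mulVec_inr_eq_constraint [NeZero L] (hL : 2 ≤ L) (t : ℝ)
    (v : ZMod L ⊕ ZMod L → ℂ) (j : ZMod L) :
    (deltaChainT L t *ᵥ v) (.inr j) = t / √2 * deltaChainConstraint L v j := by
  rw [deltaChainT_mulVec_inr hL, deltaChainConstraint_apply, Complex.ofReal_div]
  field_simp

theorem sqrt_two_mul_deltaChainT_mulVec_inl [NeZero L] (hL : 3 ≤ L) (t : ℝ)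
    (v : ZMod L ⊕ ZMod L → ℂ) (j : ZMod L) :
    √2 * (deltaChainT L t *ᵥ v) (.inl j)
      = (deltaChainT L t *ᵥ v) (.inr j) + (deltaChainT L t *ᵥ v) (.inr (j - 1)) := by
  have hs : (√2 : ℂ) ^ 2 = 2 := by norm_cast; simp
  rw [deltaChainT_mulVec_inl hL, deltaChainT_mulVec_inr (by omega),
    deltaChainT_mulVec_inr (by omega), sub_add_cancel]
  push_cast
  field_simp
  linear_combination (t * (2 * v (.inl j) + v (.inl (j + 1)) + v (.inl (j - 1)))) * hs

theorem ker_deltaChainT [NeZero L] (hL : 3 ≤ L) {t : ℝ} (ht : t ≠ 0) :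
    LinearMap.ker (deltaChainT L t).mulVecLin = LinearMap.ker (deltaChainConstraint L) := by
  have hc : (t : ℂ) / √2 ≠ 0 := by simp [ht]
  ext v
  simp only [LinearMap.mem_ker, mulVecLin_apply]
  constructor
  · intro h
    ext j
    have hj := congrFun h (.inr j)
    rw [deltaChainT_mulVec_inr_eq_constraint (by omega), Pi.zero_apply] at hj
    exact (mul_eq_zero.mp hj).resolve_left hc
  · intro h
    have hinr : ∀ j, (deltaChainT L t *ᵥ v) (.inr j) = 0 := fun j => by
      rw [deltaChainT_mulVec_inr_eq_constraint (by omega), h, Pi.zero_apply, mul_zero]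
    ext (j | j)
    · have hj := sqrt_two_mul_deltaChainT_mulVec_inl hL t v j
      rw [hinr, hinr, add_zero] at hj
      simpa using hj
    · exact hinr j

theorem deltaChainConstraint_surjective : Function.Surjective (deltaChainConstraint L) := by
  intro c
  refine ⟨Sum.elim 0 fun j => c j / √2, ?_⟩
  ext j
  simp [mul_div_cancel₀]

theorem finrank_ker_deltaChainT [NeZero L] (hL : 3 ≤ L) {t : ℝ} (ht : t ≠ 0) :
    Module.finrank ℂ (LinearMap.ker (deltaChainT L t).mulVecLin) = L := by
  have h := (deltaChainConstraint L).finrank_range_add_finrank_ker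
  rw [LinearMap.range_eq_top.mpr deltaChainConstraint_surjective, finrank_top,
    Module.finrank_fintype_fun_eq_card, Module.finrank_fintype_fun_eq_card, Fintype.card_sum,
    ZMod.card] at h
  rw [ker_deltaChainT hL ht]
  omega

noncomputable def deltaChainExtend (b : ZMod L → ℂ) : ZMod L ⊕ ZMod L → ℂ :=
  Sum.elim b fun j => -(b j + b (j + 1)) / √2

theorem deltaChainExtend_mem_ker (b : ZMod L → ℂ) :
    deltaChainExtend b ∈ LinearMap.ker (deltaChainConstraint L) := by
  ext j
  simp only [deltaChainConstraint_apply, deltaChainExtend, Sum.elim_inl, Sum.elim_inr,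
    Pi.zero_apply]
  field_simp
  ring

theorem mem_iff_of_indicator_mem_ker_deltaChainConstraint (hL : 2 ≤ L)
    {S : Set (ZMod L ⊕ ZMod L)}
    (hS : ∀ v ∈ LinearMap.ker (deltaChainConstraint L),
      S.indicator v ∈ LinearMap.ker (deltaChainConstraint L)) (k : ZMod L) :
    (.inl k ∈ S ↔ .inr k ∈ S) ∧ (.inl (k + 1) ∈ S ↔ .inr k ∈ S) := by
  have h1 : (1 : ZMod L) ≠ 0 := by exact_mod_cast ZMod.natCast_ne_zero_of_pos_of_lt one_pos hL
  have hs : (√2 : ℂ) ≠ 0 := by simp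
  have hsingle (i : ZMod L) :
      deltaChainConstraint L (S.indicator (deltaChainExtend (Pi.single i 1))) k = 0 :=
    congrFun (hS _ (deltaChainExtend_mem_ker _)) k
  have hk := hsingle k
  have hk1 := hsingle (k + 1)
  by_cases hb : .inl k ∈ S <;> by_cases hb' : .inl (k + 1) ∈ S <;> by_cases hw : .inr k ∈ S <;>
    simp [deltaChainExtend, Pi.single_apply, h1, hs, hb, hb', hw] at hk hk1 ⊢

theorem eq_empty_or_eq_univ_of_indicator_mem_ker_deltaChainT [NeZero L] (hL : 3 ≤ L) {t : ℝ}
    (ht : t ≠ 0) (S : Set (ZMod L ⊕ ZMod L))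
    (hS : ∀ v ∈ LinearMap.ker (deltaChainT L t).mulVecLin,
      S.indicator v ∈ LinearMap.ker (deltaChainT L t).mulVecLin) :
    S = ∅ ∨ S = Set.univ := by
  rw [ker_deltaChainT hL ht] at hS
  have h := mem_iff_of_indicator_mem_ker_deltaChainConstraint (by omega) hS
  have hinl : ∀ j, .inl j ∈ S ↔ .inl 0 ∈ S :=
    ZMod.iff_zero_of_iff_add_one fun k => (h k).1.trans (h k).2.symm
  have hall : ∀ x, x ∈ S ↔ .inl 0 ∈ S := by
    rintro (j | j)
    · exact hinl j
    · exact (h j).1.symm.trans (hinl j)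
  by_cases h0 : .inl 0 ∈ S
  · exact .inr (Set.eq_univ_of_forall fun x => (hall x).mpr h0)
  · exact .inl (Set.eq_empty_of_forall_notMem fun x hx => h0 ((hall x).mp hx))

end DeltaChain

/-- For the delta-chain hopping matrix `T`: the kernel of `T` has dimension exactly `L`;
the matrix `P₀` of the orthogonal projection of `ℂ^Λ` onto `ker T` (characterized by:
Hermitian, idempotent, maps everything into `ker T`, and fixes `ker T`) has all diagonal
entries nonzero; and the matrix `((P₀)_{x,y})_{x,y∈Λ}` is irreducible. -/
theorem deltaChain_flatBand_irreducible (L : ℕ) [NeZero L] (hL : 3 ≤ L)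
    (t : ℝ) (ht : 0 < t)
    (P₀ : Matrix (ZMod L ⊕ ZMod L) (ZMod L ⊕ ZMod L) ℂ)
    (hH : P₀.conjTranspose = P₀) (hPP : P₀ * P₀ = P₀)
    (hmem : ∀ v : (ZMod L ⊕ ZMod L) → ℂ,
      P₀.mulVec v ∈ LinearMap.ker (deltaChainT L t).mulVecLin)
    (hfix : ∀ v ∈ LinearMap.ker (deltaChainT L t).mulVecLin, P₀.mulVec v = v) :
    Module.finrank ℂ (LinearMap.ker (deltaChainT L t).mulVecLin) = L ∧
    (∀ x : ZMod L ⊕ ZMod L, P₀ x x ≠ 0) ∧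
    ¬ MatrixReducibleOn (Set.univ : Set (ZMod L ⊕ ZMod L)) P₀ := by
  have : Nontrivial (ZMod L ⊕ ZMod L) := ⟨⟨.inl 0, .inr 0, Sum.inl_ne_inr⟩⟩
  have hirr : ¬ MatrixReducibleOn Set.univ P₀ := not_matrixReducibleOn_univ hH hmem hfix
    (eq_empty_or_eq_univ_of_indicator_mem_ker_deltaChainT hL ht.ne')
  exact ⟨finrank_ker_deltaChainT hL ht.ne',
    diag_ne_zero_of_not_matrixReducibleOn_univ hH hPP hirr, hirr⟩
end
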